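/- arXiv:2605.14072 — 3 statements merged into one kernel-verified Lean document; each statement's English description precedes it below -/
import Mathlib

section
/- If ((I_t)_{t∈Ω}, θ) emulates 𝓕 ∈ FHC(Ω), then for every finitely supported a : Ω → ℝ, ‖Σ_t a(t)·x_t‖_θ = ‖a‖_𝓕, where x_t is the indicator function of I_t and ‖a‖_𝓕 = sup{ Σ_{t∈F} |a(t)| : F ∈ 𝓕 }; in particular (x_t) is isometrically equivalent to the canonical basis of the combinatorial space X_𝓕. -/
open scoped ENNReal

/-- The combinatorial extended norm generated by a family of finite sets. -/
noncomputable def combNorm {α : Type*} (F : Set (Finset α)) (x : α → ℝ) : ℝ≥0∞ :=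
  ⨆ S ∈ F, ENNReal.ofReal (∑ i ∈ S, |x i|)

/-- A family of finite subsets of `Ω` which is hereditary and covers `Ω`. -/
def FHC {Ω : Type*} (F : Set (Finset Ω)) : Prop :=
  (∀ ⦃E S : Finset Ω⦄, E ⊆ S → S ∈ F → E ∈ F) ∧ (∀ t : Ω, {t} ∈ F)

/-- A finite set of naturals is an interval. -/
def IsIntervalN (S : Finset ℕ) : Prop :=
  ∀ a ∈ S, ∀ b ∈ S, ∀ c, a ≤ c → c ≤ b → c ∈ S

/-- The family of finite sets on which the injection `θ : ℕ → ℚ` is strictly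
increasing (the finite cliques of the graph generated by `θ`). -/
def sierCliquesQ (θ : ℕ → ℚ) : Set (Finset ℕ) :=
  {S | StrictMonoOn θ (S : Set ℕ)}

/-- The pair `((I_t)_{t ∈ Ω}, θ)` emulates the family `F`: the `I_t` are pairwise
disjoint nonempty finite intervals in ℕ, `θ` is an injection, and with `x_t` the
indicator of `I_t`, `‖Σ_{t ∈ E} x_t‖_θ = |E|` iff `E ∈ F`. -/
def Emulates {Ω : Type*} (I : Ω → Finset ℕ) (θ : ℕ → ℚ) (F : Set (Finset Ω)) : Prop :=
  (∀ t, (I t).Nonempty) ∧ (∀ t, IsIntervalN (I t)) ∧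
  (∀ s t, s ≠ t → Disjoint (I s) (I t)) ∧ Function.Injective θ ∧
  ∀ E : Finset Ω,
    combNorm (sierCliquesQ θ) (fun i => ∑ t ∈ E, if i ∈ I t then (1 : ℝ) else 0) =
      (E.card : ℝ≥0∞) ↔ E ∈ F

section Aux

open scoped Classical

lemma le_combNorm {α : Type*} {F : Set (Finset α)} {x : α → ℝ} {S : Finset α} (hS : S ∈ F) :
    ENNReal.ofReal (∑ i ∈ S, |x i|) ≤ combNorm F x :=
  le_iSup₂ (f := fun S (_ : S ∈ F) => ENNReal.ofReal (∑ i ∈ S, |x i|)) S hS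

lemma combNorm_le {α : Type*} {F : Set (Finset α)} {x : α → ℝ} {c : ℝ≥0∞}
    (h : ∀ S ∈ F, ENNReal.ofReal (∑ i ∈ S, |x i|) ≤ c) : combNorm F x ≤ c :=
  iSup₂_le h

lemma sum_abs_ind {Ω : Type*} (I : Ω → Finset ℕ) (E : Finset Ω) (S : Finset ℕ) :
    ∑ i ∈ S, |∑ t ∈ E, if i ∈ I t then (1 : ℝ) else 0| =
      ∑ t ∈ E, ((S ∩ I t).card : ℝ) := by
  have h1 : ∀ i ∈ S, |∑ t ∈ E, if i ∈ I t then (1 : ℝ) else 0| =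
      ∑ t ∈ E, if i ∈ I t then (1 : ℝ) else 0 := fun i _ =>
    abs_of_nonneg (Finset.sum_nonneg fun t _ => by positivity)
  rw [Finset.sum_congr rfl h1, Finset.sum_comm]
  refine Finset.sum_congr rfl fun t _ => ?_
  rw [Finset.sum_boole, Finset.filter_mem_eq_inter]

lemma card_le_one {Ω : Type*} {F : Set (Finset Ω)} (hF : FHC F) {I : Ω → Finset ℕ} {θ : ℕ → ℚ}
    (hem : Emulates I θ F) (t : Ω) {S : Finset ℕ} (hS : S ∈ sierCliquesQ θ) :
    (S ∩ I t).card ≤ 1 := by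
  have h1 := (hem.2.2.2.2 {t}).mpr (hF.2 t)
  have h2 := (le_combNorm (x := fun i => ∑ t' ∈ ({t} : Finset Ω),
    if i ∈ I t' then (1 : ℝ) else 0) hS).trans h1.le
  rw [sum_abs_ind, Finset.sum_singleton, Finset.card_singleton, Nat.cast_one,
    ENNReal.ofReal_le_one] at h2
  exact_mod_cast h2

lemma exists_clique {Ω : Type*} {F : Set (Finset Ω)} (hF : FHC F) {I : Ω → Finset ℕ}
    {θ : ℕ → ℚ} (hem : Emulates I θ F) {E : Finset Ω} (hE : E ∈ F) :
    ∃ S ∈ sierCliquesQ θ, ∀ t ∈ E, (S ∩ I t).card = 1 := by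
  have hempty : (∅ : Finset ℕ) ∈ sierCliquesQ θ := fun a ha => by simp at ha
  by_contra hcon
  push_neg at hcon
  have hEcard := (hem.2.2.2.2 E).mpr hE
  have hne : E.Nonempty := by
    rcases E.eq_empty_or_nonempty with rfl | h
    · obtain ⟨t, ht, -⟩ := hcon ∅ hempty
      simp at ht
    · exact h
  have hub : combNorm (sierCliquesQ θ)
      (fun i => ∑ t ∈ E, if i ∈ I t then (1 : ℝ) else 0) ≤ ((E.card - 1 : ℕ) : ℝ≥0∞) := by
    apply combNorm_le
    intro S hS
    rw [sum_abs_ind]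
    obtain ⟨t0, ht0E, ht0⟩ := hcon S hS
    have h0 : (S ∩ I t0).card = 0 := by
      have := card_le_one hF hem t0 hS
      omega
    have hsum : ∑ t ∈ E, ((S ∩ I t).card : ℝ) ≤ ((E.card - 1 : ℕ) : ℝ) := by
      have hrw : ∑ t ∈ E, ((S ∩ I t).card : ℝ) = ∑ t ∈ E.erase t0, ((S ∩ I t).card : ℝ) := by
        rw [← Finset.add_sum_erase E _ ht0E, h0, Nat.cast_zero, zero_add]
      rw [hrw]
      calc ∑ t ∈ E.erase t0, ((S ∩ I t).card : ℝ)
          ≤ ∑ _t ∈ E.erase t0, (1 : ℝ) :=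
            Finset.sum_le_sum fun t _ => by exact_mod_cast card_le_one hF hem t hS
        _ = ((E.erase t0).card : ℝ) := by rw [Finset.sum_const]; simp
        _ = ((E.card - 1 : ℕ) : ℝ) := by rw [Finset.card_erase_of_mem ht0E]
    calc ENNReal.ofReal (∑ t ∈ E, ((S ∩ I t).card : ℝ))
        ≤ ENNReal.ofReal ((E.card - 1 : ℕ) : ℝ) := ENNReal.ofReal_le_ofReal hsum
      _ = ((E.card - 1 : ℕ) : ℝ≥0∞) := ENNReal.ofReal_natCast _
  rw [hEcard] at hub
  have : E.card ≤ E.card - 1 := by exact_mod_cast hub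
  have : 1 ≤ E.card := Finset.card_pos.mpr hne
  omega

lemma filter_mem {Ω : Type*} {F : Set (Finset Ω)} (hF : FHC F) {I : Ω → Finset ℕ}
    {θ : ℕ → ℚ} (hem : Emulates I θ F) {S : Finset ℕ} (hS : S ∈ sierCliquesQ θ)
    (T : Finset Ω) : (T.filter fun t => (S ∩ I t).Nonempty) ∈ F := by
  set E := T.filter fun t => (S ∩ I t).Nonempty with hEdef
  apply (hem.2.2.2.2 E).mp
  apply le_antisymm
  · apply combNorm_le
    intro S' hS'
    rw [sum_abs_ind]
    calc ENNReal.ofReal (∑ t ∈ E, ((S' ∩ I t).card : ℝ))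
        ≤ ENNReal.ofReal (∑ _t ∈ E, (1 : ℝ)) := ENNReal.ofReal_le_ofReal
          (Finset.sum_le_sum fun t _ => by exact_mod_cast card_le_one hF hem t hS')
      _ = (E.card : ℝ≥0∞) := by
          rw [Finset.sum_const, nsmul_eq_mul, mul_one, ENNReal.ofReal_natCast]
  · calc (E.card : ℝ≥0∞) = ENNReal.ofReal (∑ _t ∈ E, (1 : ℝ)) := by
          rw [Finset.sum_const, nsmul_eq_mul, mul_one, ENNReal.ofReal_natCast]
      _ ≤ ENNReal.ofReal (∑ t ∈ E, ((S ∩ I t).card : ℝ)) := by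
          refine ENNReal.ofReal_le_ofReal (Finset.sum_le_sum fun t ht => ?_)
          have h1 : 1 ≤ (S ∩ I t).card :=
            Finset.card_pos.mpr (Finset.mem_filter.mp ht).2
          exact_mod_cast h1
      _ ≤ combNorm (sierCliquesQ θ)
            (fun i => ∑ t ∈ E, if i ∈ I t then (1 : ℝ) else 0) := by
          rw [← sum_abs_ind]; exact le_combNorm hS

end Aux

theorem stmt_13 {Ω : Type*} [Countable Ω] (F : Set (Finset Ω)) (hF : FHC F)
    (I : Ω → Finset ℕ) (θ : ℕ → ℚ) (hem : Emulates I θ F) :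
    ∀ a : Ω → ℝ, (Function.support a).Finite →
      combNorm (sierCliquesQ θ)
          (fun i => ∑ᶠ t, a t * (if i ∈ I t then (1 : ℝ) else 0)) =
        combNorm F a := by
  intro a hfin
  classical
  set T := hfin.toFinset with hT
  have hfun : (fun i => ∑ᶠ t, a t * (if i ∈ I t then (1 : ℝ) else 0)) =
      fun i => ∑ t ∈ T, a t * (if i ∈ I t then (1 : ℝ) else 0) := by
    funext i
    refine finsum_eq_sum_of_support_subset _ fun t ht => ?_
    have ha : a t ≠ 0 := fun h => ht (by simp [h])
    exact Finset.mem_coe.mpr (hfin.mem_toFinset.mpr ha)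
  rw [hfun]
  apply le_antisymm
  · apply combNorm_le
    intro S hS
    set E := T.filter (fun t => (S ∩ I t).Nonempty) with hE
    have hEF : E ∈ F := filter_mem hF hem hS T
    have key : ∑ i ∈ S, |∑ t ∈ T, a t * (if i ∈ I t then (1 : ℝ) else 0)| ≤
        ∑ t ∈ E, |a t| := by
      calc ∑ i ∈ S, |∑ t ∈ T, a t * (if i ∈ I t then (1 : ℝ) else 0)|
          ≤ ∑ i ∈ S, ∑ t ∈ T, |a t| * (if i ∈ I t then (1 : ℝ) else 0) := by
            refine Finset.sum_le_sum fun i _ => ?_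
            refine (Finset.abs_sum_le_sum_abs _ _).trans (le_of_eq ?_)
            refine Finset.sum_congr rfl fun t _ => ?_
            rw [abs_mul]
            congr 1
            split <;> simp
        _ = ∑ t ∈ T, |a t| * ((S ∩ I t).card : ℝ) := by
            rw [Finset.sum_comm]
            refine Finset.sum_congr rfl fun t _ => ?_
            rw [← Finset.mul_sum, Finset.sum_boole, Finset.filter_mem_eq_inter]
        _ = ∑ t ∈ E, |a t| * ((S ∩ I t).card : ℝ) := by
            rw [hE]
            refine (Finset.sum_filter_of_ne fun t _ hne => ?_).symm
            by_contra h
            rw [Finset.not_nonempty_iff_eq_empty] at h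
            exact hne (by simp [h])
        _ ≤ ∑ t ∈ E, |a t| := Finset.sum_le_sum fun t _ =>
            mul_le_of_le_one_right (abs_nonneg _)
              (by exact_mod_cast card_le_one hF hem t hS)
    exact (ENNReal.ofReal_le_ofReal key).trans (le_combNorm hEF)
  · apply combNorm_le
    intro E hEF
    obtain ⟨S, hS, hScard⟩ := exists_clique hF hem hEF
    refine le_trans (ENNReal.ofReal_le_ofReal ?_) (le_combNorm hS)
    have hdisj : (↑E : Set Ω).PairwiseDisjoint (fun t => S ∩ I t) := fun s _ t _ hst =>
      Disjoint.mono Finset.inter_subset_right Finset.inter_subset_right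
        (hem.2.2.1 s t hst)
    have hsub : E.biUnion (fun t => S ∩ I t) ⊆ S :=
      Finset.biUnion_subset.mpr fun t _ => Finset.inter_subset_left
    calc ∑ t ∈ E, |a t|
        = ∑ t ∈ E, ∑ i ∈ S ∩ I t,
            |∑ t' ∈ T, a t' * (if i ∈ I t' then (1 : ℝ) else 0)| := by
          refine Finset.sum_congr rfl fun t ht => ?_
          obtain ⟨i, hi⟩ := Finset.card_eq_one.mp (hScard t ht)
          have hiIt : i ∈ I t := (Finset.mem_inter.mp (hi ▸ Finset.mem_singleton_self i)).2
          have hg : ∑ t' ∈ T, a t' * (if i ∈ I t' then (1 : ℝ) else 0) = a t := by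
            by_cases htT : t ∈ T
            · rw [Finset.sum_eq_single_of_mem t htT]
              · simp [hiIt]
              · intro t' _ hne
                have hiI : i ∉ I t' := fun h =>
                  Finset.disjoint_left.mp (hem.2.2.1 t' t hne) h hiIt
                simp [hiI]
            · have ha : a t = 0 := by
                by_contra h
                exact htT (hfin.mem_toFinset.mpr h)
              rw [ha]
              apply Finset.sum_eq_zero
              intro t' ht'
              have hne : t' ≠ t := fun h => htT (h ▸ ht')
              have hiI : i ∉ I t' := fun h =>
                Finset.disjoint_left.mp (hem.2.2.1 t' t hne) h hiIt
              simp [hiI]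
          rw [hi, Finset.sum_singleton, hg]
      _ = ∑ i ∈ E.biUnion (fun t => S ∩ I t),
            |∑ t' ∈ T, a t' * (if i ∈ I t' then (1 : ℝ) else 0)| :=
          (Finset.sum_biUnion hdisj).symm
      _ ≤ ∑ i ∈ S, |∑ t' ∈ T, a t' * (if i ∈ I t' then (1 : ℝ) else 0)| :=
          Finset.sum_le_sum_of_subset_of_nonneg hsub fun _ _ _ => abs_nonneg _
end

section
/- Suppose 𝓕 ∈ FHC(ℕ) (where ℕ = {1,2,3,…}) has an emulation ((I_n)_{n∈ℕ}, θ) whose intervals are increasingly ordered, I_1 < I_2 < ⋯ (meaning max I_n < min I_{n+1} for all n). Then the family 𝐒(𝓕) obtained by the Schreier operation also has an emulation ((J_n)_{n∈ℕ}, θ*) with J_1 < J_2 < ⋯. -/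
open scoped ENNReal

/-- The Schreier operation on families of finite subsets of `ℕ+ = {1,2,3, …}`:
`𝐒(𝓕) = {∅} ∪ { F₁ ∪ ⋯ ∪ F_m : F_k ∈ 𝓕 ∖ {∅}, m ≤ min F₁, F₁ < ⋯ < F_m }`. -/
def SchreierOp (F : Set (Finset ℕ+)) : Set (Finset ℕ+) :=
  {E | E = ∅ ∨ ∃ (m : ℕ) (hm : 0 < m) (Fs : Fin m → Finset ℕ+),
    (∀ k, Fs k ∈ F ∧ (Fs k).Nonempty) ∧
    (∀ k l : Fin m, k < l → ∀ a ∈ Fs k, ∀ b ∈ Fs l, a < b) ∧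
    (∀ a ∈ Fs ⟨0, hm⟩, m ≤ (a : ℕ)) ∧
    E = Finset.univ.biUnion Fs}


namespace Stmt14Aux
open Finset

/-! ### The order-embedding `phi : ℚ → (0,1)` and values `v k a = -k + phi a` -/

noncomputable def phi (q : ℚ) : ℚ := 1/2 + q / (2 * (1 + |q|))

lemma phi_pos (q : ℚ) : 0 < phi q := by
  have h : 0 < 1 + |q| := by positivity
  have h2 : -(1 + |q|) < q := by
    have := abs_nonneg q
    have := neg_abs_le q
    linarith
  have : -(1/2 : ℚ) < q / (2 * (1 + |q|)) := by
    rw [lt_div_iff₀ (by positivity : (0:ℚ) < 2 * (1 + |q|))]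
    linarith
  unfold phi; linarith

lemma phi_lt_one (q : ℚ) : phi q < 1 := by
  have h : 0 < 1 + |q| := by positivity
  have h2 : q < 1 + |q| := by
    have := le_abs_self q
    linarith
  have : q / (2 * (1 + |q|)) < 1/2 := by
    rw [div_lt_iff₀ (by positivity)]
    linarith
  unfold phi; linarith

lemma phi_strictMono : StrictMono phi := by
  intro q r hqr
  have hq : 0 < 1 + |q| := by positivity
  have hr : 0 < 1 + |r| := by positivity
  have key : q * (1 + |r|) < r * (1 + |q|) := by
    rcases le_or_gt 0 q with h1 | h1 <;> rcases le_or_gt 0 r with h2 | h2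
    · rw [abs_of_nonneg h1, abs_of_nonneg h2]; nlinarith
    · linarith
    · have : |q| ≥ 0 := abs_nonneg q
      have : |r| ≥ 0 := abs_nonneg r
      nlinarith [neg_abs_le q, le_abs_self q, abs_nonneg r, abs_of_nonneg h2]
    · rw [abs_of_neg h1, abs_of_neg h2]; nlinarith
  have : q / (2 * (1 + |q|)) < r / (2 * (1 + |r|)) := by
    rw [div_lt_div_iff₀ (by positivity) (by positivity)]
    nlinarith
  unfold phi; linarith

noncomputable def v (k : ℕ) (a : ℚ) : ℚ := -(k : ℚ) + phi a

lemma v_lt_v {k k' : ℕ} {a a' : ℚ} :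
    v k a < v k' a' ↔ k' < k ∨ (k = k' ∧ a < a') := by
  constructor
  · intro h
    rcases lt_trichotomy k k' with hk | hk | hk
    · exfalso
      have h1 : (k : ℚ) + 1 ≤ (k' : ℚ) := by exact_mod_cast hk
      have := phi_pos a; have := phi_lt_one a'
      unfold v at h; linarith
    · subst hk
      right
      refine ⟨rfl, ?_⟩
      have : phi a < phi a' := by unfold v at h; linarith
      by_contra hc
      push_neg at hc
      exact absurd (phi_strictMono.le_iff_le.mpr hc) (not_le.mpr this)
    · exact Or.inl hk
  · intro h
    rcases h with hk | ⟨rfl, ha⟩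
    · have h1 : (k' : ℚ) + 1 ≤ (k : ℚ) := by exact_mod_cast hk
      have := phi_pos a'; have := phi_lt_one a
      unfold v; linarith
    · have := phi_strictMono ha
      unfold v; linarith

lemma v_inj {k k' : ℕ} {a a' : ℚ} (h : v k a = v k' a') : k = k' ∧ a = a' := by
  have h1 : ¬ (v k a < v k' a') := by rw [h]; exact lt_irrefl _
  have h2 : ¬ (v k' a' < v k a) := by rw [h]; exact lt_irrefl _
  rw [v_lt_v] at h1 h2
  push_neg at h1 h2
  have hk : k = k' := le_antisymm (h1.1) (h2.1)
  subst hk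
  have : phi a = phi a' := by unfold v at h; linarith
  exact ⟨rfl, phi_strictMono.injective this⟩

/-- Abbreviation for the `ℕ+` with value `n+1`. -/
def T (n : ℕ) : ℕ+ := ⟨n + 1, n.succ_pos⟩

/-! ### Block layout -/

section Layout
variable (I : ℕ+ → Finset ℕ) (θ : ℕ → ℚ)

/-- Length of the `n`-th (0-indexed) new block. -/
def L (n : ℕ) : ℕ := (n + 1) * (I ⟨n + 1, n.succ_pos⟩).card

/-- Left endpoints of the new blocks. -/
def f : ℕ → ℕ
  | 0 => 0
  | n + 1 => f n + L I n

/-- The new intervals. -/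
def J (t : ℕ+) : Finset ℕ := Finset.Ico (f I ((t : ℕ) - 1)) (f I (t : ℕ))

/-- The set of `θ'`-values used on block `t`. -/
noncomputable def W (t : ℕ+) : Finset ℚ :=
  ((Finset.Icc 1 (t : ℕ)) ×ˢ (I t)).image (fun p => v p.1 (θ p.2))

/-- The block index (0-indexed) of a point. -/
def g (i : ℕ) : ℕ := Nat.findGreatest (fun m => f I m ≤ i) i

/-- The new injection. -/
noncomputable def theta' (i : ℕ) : ℚ :=
  if h : i - f I (g I i) < (W I θ (T (g I i))).card then
    ((W I θ (T (g I i))).orderIsoOfFin rfl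
      ⟨(W I θ (T (g I i))).card - 1 - (i - f I (g I i)), by omega⟩ : ℚ)
  else 0

variable {I θ}
variable (hne : ∀ t, (I t).Nonempty) (hinj : Function.Injective θ)
    (hdisj : ∀ s t, s ≠ t → Disjoint (I s) (I t))

section
include hne

lemma L_pos (n : ℕ) : 0 < L I n := by
  have := (hne ⟨n + 1, n.succ_pos⟩).card_pos
  unfold L; positivity

lemma f_lt (n : ℕ) : f I n < f I (n + 1) := by
  have := L_pos hne (I := I) n
  show f I n < f I n + L I n
  omega

lemma f_mono : StrictMono (f I) := strictMono_nat_of_lt_succ (f_lt hne)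

lemma le_f (n : ℕ) : n ≤ f I n := by
  induction n with
  | zero => exact Nat.zero_le _
  | succ n ih => have := f_lt hne (I := I) n; omega

lemma g_eq {i n : ℕ} (h1 : f I n ≤ i) (h2 : i < f I (n + 1)) : g I i = n := by
  have hle : n ≤ g I i := Nat.le_findGreatest (le_trans (le_f hne n) h1) h1
  have hspec : f I (g I i) ≤ i := by
    unfold g
    exact Nat.findGreatest_spec (P := fun m => f I m ≤ i) (Nat.zero_le i)
      (show f I 0 ≤ i from Nat.zero_le i)
  by_contra hc
  have : f I (n + 1) ≤ f I (g I i) := (f_mono hne).le_iff_le.mpr (by omega)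
  omega

lemma g_spec (i : ℕ) : f I (g I i) ≤ i ∧ i < f I (g I i + 1) := by
  have hspec : f I (g I i) ≤ i := by
    unfold g
    exact Nat.findGreatest_spec (P := fun m => f I m ≤ i) (Nat.zero_le i)
      (show f I 0 ≤ i from Nat.zero_le i)
  refine ⟨hspec, ?_⟩
  by_contra hc
  push_neg at hc
  have : g I i + 1 ≤ g I i := Nat.le_findGreatest (le_trans (le_f hne _) hc) hc
  omega

lemma mem_J_iff {i : ℕ} {t : ℕ+} : i ∈ J I t ↔ g I i = (t : ℕ) - 1 := by
  have ht : 1 ≤ (t : ℕ) := t.one_le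
  rw [J, Finset.mem_Ico]
  constructor
  · intro hi
    exact g_eq hne hi.1 (by rw [Nat.sub_add_cancel ht]; exact hi.2)
  · intro hg
    have h := g_spec hne (I := I) i
    rw [hg, Nat.sub_add_cancel ht] at h
    exact h

end

lemma pnat_mk_eq (t : ℕ+) : (⟨(t : ℕ) - 1 + 1, Nat.succ_pos _⟩ : ℕ+) = t := by
  have ht : 1 ≤ (t : ℕ) := t.one_le
  apply PNat.coe_injective
  show (t : ℕ) - 1 + 1 = (t : ℕ)
  omega

lemma card_W (hinj : Function.Injective θ) (t : ℕ+) :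
    (W I θ t).card = (t : ℕ) * (I t).card := by
  rw [W, Finset.card_image_of_injOn, Finset.card_product, Nat.card_Icc]
  · congr 1
  · rintro ⟨k, a⟩ hka ⟨k', a'⟩ hka' hv
    obtain ⟨hk, ha⟩ := v_inj hv
    exact Prod.ext hk (hinj ha)

lemma card_J (hne : ∀ t, (I t).Nonempty) (t : ℕ+) :
    (J I t).card = (t : ℕ) * (I t).card := by
  have ht : 1 ≤ (t : ℕ) := t.one_le
  have h1 : f I ((t : ℕ) - 1 + 1) = f I ((t : ℕ) - 1) + ((t : ℕ) - 1 + 1) * (I t).card := by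
    show f I ((t : ℕ) - 1) + L I ((t : ℕ) - 1) = _
    rw [L, pnat_mk_eq]
  have h2 : f I (t : ℕ) = f I ((t : ℕ) - 1) + (t : ℕ) * (I t).card := by
    conv_lhs => rw [show (t : ℕ) = (t : ℕ) - 1 + 1 from by omega]
    rw [h1]
    congr 2
    omega
  rw [J, Nat.card_Ico, h2]
  omega

lemma card_W_eq_card_J (hinj : Function.Injective θ) (hne : ∀ t, (I t).Nonempty) (t : ℕ+) :
    (W I θ t).card = (J I t).card := by
  rw [card_W hinj, card_J hne]

lemma T_eq (t : ℕ+) : T ((t : ℕ) - 1) = t := pnat_mk_eq t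

lemma mem_J_mk {i n : ℕ} : i ∈ J I (T n) ↔ f I n ≤ i ∧ i < f I (n + 1) := by
  rw [J, Finset.mem_Ico]
  rfl

lemma f_succ_eq (hinj : Function.Injective θ) (n : ℕ) :
    f I (n + 1) = f I n + (W I θ (T n)).card := by
  rw [card_W hinj]
  rfl

lemma card_W_mk (hinj : Function.Injective θ) (n : ℕ) :
    (W I θ (T n)).card = f I (n + 1) - f I n := by
  have := f_succ_eq (I := I) (θ := θ) hinj n
  omega

lemma theta'_eq_mk (hne : ∀ t, (I t).Nonempty) {i n : ℕ}
    (h1 : f I n ≤ i) (h2 : i < f I (n + 1)) (hlt : i - f I n < (W I θ (T n)).card) :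
    theta' I θ i = ((W I θ (T n)).orderIsoOfFin rfl
      ⟨(W I θ (T n)).card - 1 - (i - f I n), by omega⟩ : ℚ) := by
  have hg : g I i = n := g_eq hne h1 h2
  subst hg
  unfold theta'
  rw [dif_pos hlt]

lemma theta'_mem_W_mk (hne : ∀ t, (I t).Nonempty) (hinj : Function.Injective θ) {i n : ℕ}
    (h1 : f I n ≤ i) (h2 : i < f I (n + 1)) : theta' I θ i ∈ W I θ (T n) := by
  have hflt := f_lt hne (I := I) n
  have hlt : i - f I n < (W I θ (T n)).card := by
    rw [card_W_mk hinj]; omega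
  rw [theta'_eq_mk hne h1 h2 hlt]
  exact Subtype.coe_prop _

lemma theta'_mem_W (hne : ∀ t, (I t).Nonempty) (hinj : Function.Injective θ) {i : ℕ} {t : ℕ+}
    (hi : i ∈ J I t) : theta' I θ i ∈ W I θ t := by
  rw [← T_eq t] at hi ⊢
  rw [mem_J_mk] at hi
  exact theta'_mem_W_mk hne hinj hi.1 hi.2

lemma theta'_anti (hne : ∀ t, (I t).Nonempty) (hinj : Function.Injective θ) {t : ℕ+} {i i' : ℕ}
    (hi : i ∈ J I t) (hi' : i' ∈ J I t) (h : i < i') : theta' I θ i' < theta' I θ i := by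
  rw [← T_eq t] at hi hi'
  rw [mem_J_mk] at hi hi'
  set n := (t : ℕ) - 1
  have hflt := f_lt hne (I := I) n
  have hlt : i - f I n < (W I θ (T n)).card := by rw [card_W_mk hinj]; omega
  have hlt' : i' - f I n < (W I θ (T n)).card := by rw [card_W_mk hinj]; omega
  rw [theta'_eq_mk hne hi.1 hi.2 hlt, theta'_eq_mk hne hi'.1 hi'.2 hlt']
  have : ((W I θ (T n)).orderIsoOfFin rfl ⟨(W I θ (T n)).card - 1 - (i' - f I n), by omega⟩) <
      ((W I θ (T n)).orderIsoOfFin rfl ⟨(W I θ (T n)).card - 1 - (i - f I n), by omega⟩) := by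
    rw [OrderIso.lt_iff_lt]
    rw [Fin.mk_lt_mk]
    omega
  exact_mod_cast this

lemma theta'_surjOn (hne : ∀ t, (I t).Nonempty) (hinj : Function.Injective θ) {t : ℕ+} {w : ℚ}
    (hw : w ∈ W I θ t) : ∃ i ∈ J I t, theta' I θ i = w := by
  rw [← T_eq t] at hw ⊢
  set n := (t : ℕ) - 1 with hn
  set r : Fin (W I θ (T n)).card := ((W I θ (T n)).orderIsoOfFin rfl).symm ⟨w, hw⟩ with hr
  have hrlt : (r : ℕ) < (W I θ (T n)).card := r.isLt
  have hcard : (W I θ (T n)).card = f I (n + 1) - f I n := card_W_mk hinj n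
  have hfmono := f_lt hne (I := I) n
  refine ⟨f I n + ((W I θ (T n)).card - 1 - r), ?_, ?_⟩
  · rw [mem_J_mk]
    omega
  · have h1 : f I n ≤ f I n + ((W I θ (T n)).card - 1 - r) := Nat.le_add_right _ _
    have h2 : f I n + ((W I θ (T n)).card - 1 - r) < f I (n + 1) := by omega
    have hlt : f I n + ((W I θ (T n)).card - 1 - r) - f I n < (W I θ (T n)).card := by omega
    rw [theta'_eq_mk hne h1 h2 hlt]
    have hidx : (⟨(W I θ (T n)).card - 1 - (f I n + ((W I θ (T n)).card - 1 - r) - f I n),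
        by omega⟩ : Fin (W I θ (T n)).card) = r := by
      apply Fin.ext
      simp only
      omega
    rw [hidx, hr]
    rw [OrderIso.apply_symm_apply]

lemma W_mem_decode {w : ℚ} {t : ℕ+} (hw : w ∈ W I θ t) :
    ∃ k, (1 ≤ k ∧ k ≤ (t : ℕ)) ∧ ∃ a ∈ I t, w = v k (θ a) := by
  rw [W, Finset.mem_image] at hw
  obtain ⟨⟨k, a⟩, hka, hv⟩ := hw
  rw [Finset.mem_product, Finset.mem_Icc] at hka
  exact ⟨k, ⟨hka.1.1, hka.1.2⟩, a, hka.2, hv.symm⟩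

lemma W_mem_encode {k : ℕ} {a : ℕ} {t : ℕ+} (hk1 : 1 ≤ k) (hk2 : k ≤ (t : ℕ))
    (ha : a ∈ I t) : v k (θ a) ∈ W I θ t := by
  rw [W, Finset.mem_image]
  exact ⟨(k, a), by rw [Finset.mem_product, Finset.mem_Icc]; exact ⟨⟨hk1, hk2⟩, ha⟩, rfl⟩

lemma W_disjoint (hinj : Function.Injective θ) (hdisj : ∀ s t, s ≠ t → Disjoint (I s) (I t))
    {t t' : ℕ+} (h : t ≠ t') : Disjoint (W I θ t) (W I θ t') := by
  rw [Finset.disjoint_left]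
  intro w hw hw'
  obtain ⟨k, hk, a, ha, rfl⟩ := W_mem_decode hw
  obtain ⟨k', hk', a', ha', hv⟩ := W_mem_decode hw'
  obtain ⟨hkk, haa⟩ := v_inj hv
  have : a = a' := hinj haa
  subst this
  exact Finset.disjoint_left.mp (hdisj t t' h) ha ha'

lemma mem_J_self (hne : ∀ t, (I t).Nonempty) (i : ℕ) : i ∈ J I (T (g I i)) := by
  rw [mem_J_mk]
  exact g_spec hne i

lemma theta'_injective (hne : ∀ t, (I t).Nonempty) (hinj : Function.Injective θ)
    (hdisj : ∀ s t, s ≠ t → Disjoint (I s) (I t)) : Function.Injective (theta' I θ) := by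
  intro i i' h
  by_contra hii
  rcases eq_or_ne (g I i) (g I i') with hg | hg
  · have hi := mem_J_self hne (I := I) i
    have hi' := mem_J_self hne (I := I) i'
    rw [hg] at hi
    rcases Nat.lt_or_ge i i' with hlt | hge
    · exact absurd h.symm (ne_of_lt (theta'_anti hne hinj hi hi' hlt))
    · have hlt : i' < i := by omega
      exact absurd h (ne_of_lt (theta'_anti hne hinj hi' hi hlt))
  · have hT : T (g I i) ≠ T (g I i') := by
      intro hc
      have hcc : g I i + 1 = g I i' + 1 := congrArg PNat.val hc
      omega
    have h1 := theta'_mem_W hne hinj (t := T (g I i)) (mem_J_self hne (I := I) i)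
    have h2 := theta'_mem_W hne hinj (t := T (g I i')) (mem_J_self hne (I := I) i')
    rw [h] at h1
    exact Finset.disjoint_left.mp (W_disjoint hinj hdisj hT) h1 h2

lemma J_nonempty (hne : ∀ t, (I t).Nonempty) (t : ℕ+) : (J I t).Nonempty := by
  rw [J]
  rw [Finset.nonempty_Ico]
  have ht : 1 ≤ (t : ℕ) := t.one_le
  exact f_mono hne (I := I) (show (t : ℕ) - 1 < (t : ℕ) by omega)

lemma J_interval (t : ℕ+) : ∀ a ∈ J I t, ∀ b ∈ J I t, ∀ c, a ≤ c → c ≤ b → c ∈ J I t := by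
  intro a ha b hb c hac hcb
  rw [J, Finset.mem_Ico] at *
  omega

lemma J_incr (hne : ∀ t, (I t).Nonempty) (s t : ℕ+) (h : s < t) :
    ∀ a ∈ J I s, ∀ b ∈ J I t, a < b := by
  intro a ha b hb
  rw [J, Finset.mem_Ico] at ha hb
  have hst : (s : ℕ) ≤ (t : ℕ) - 1 := by
    have : (s : ℕ) < (t : ℕ) := (PNat.coe_lt_coe s t).mpr h
    omega
  have := (f_mono hne (I := I)).le_iff_le.mpr hst
  omega

lemma J_disjoint (hne : ∀ t, (I t).Nonempty) (s t : ℕ+) (h : s ≠ t) :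
    Disjoint (J I s) (J I t) := by
  rw [Finset.disjoint_left]
  intro a ha ha'
  rcases lt_or_gt_of_ne h with hlt | hlt
  · exact lt_irrefl a (J_incr hne s t hlt a ha a ha')
  · exact lt_irrefl a (J_incr hne t s hlt a ha' a ha)

end Layout

/-! ### Norm machinery -/

section Norm
open Finset

/-- The indicator sum function. -/
def xfun (K : ℕ+ → Finset ℕ) (E : Finset ℕ+) : ℕ → ℝ :=
  fun i => ∑ t ∈ E, if i ∈ K t then (1 : ℝ) else 0

variable {K : ℕ+ → Finset ℕ} {ψ : ℕ → ℚ}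

lemma sum_abs_x (S : Finset ℕ) (E : Finset ℕ+) :
    ∑ i ∈ S, |xfun K E i| = ∑ t ∈ E, ((S ∩ K t).card : ℝ) := by
  have h1 : ∀ i ∈ S, |xfun K E i| = ∑ t ∈ E, if i ∈ K t then (1 : ℝ) else 0 := by
    intro i _
    have h0 : (0 : ℝ) ≤ xfun K E i := by
      unfold xfun
      apply Finset.sum_nonneg
      intro t _
      split_ifs <;> norm_num
    rw [abs_of_nonneg h0]
    rfl
  rw [Finset.sum_congr rfl h1, Finset.sum_comm]
  refine Finset.sum_congr rfl fun t _ => ?_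
  rw [Finset.sum_boole, Finset.filter_mem_eq_inter]

lemma combNorm_le {C : Set (Finset ℕ)} {x : ℕ → ℝ} {c : ℝ≥0∞}
    (h : ∀ S ∈ C, ENNReal.ofReal (∑ i ∈ S, |x i|) ≤ c) : combNorm C x ≤ c :=
  iSup₂_le h

lemma le_combNorm {C : Set (Finset ℕ)} {x : ℕ → ℝ} {S : Finset ℕ} (hS : S ∈ C) :
    ENNReal.ofReal (∑ i ∈ S, |x i|) ≤ combNorm C x :=
  le_iSup₂_of_le S hS le_rfl

lemma inter_card_le_one (hanti : ∀ t, ∀ a ∈ K t, ∀ b ∈ K t, a < b → ψ b < ψ a)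
    {S : Finset ℕ} (hS : S ∈ sierCliquesQ ψ) (t : ℕ+) : (S ∩ K t).card ≤ 1 := by
  rw [Finset.card_le_one]
  intro a ha b hb
  rw [Finset.mem_inter] at ha hb
  by_contra hab
  rcases lt_or_gt_of_ne hab with hlt | hlt
  · have h1 : ψ a < ψ b := hS ha.1 hb.1 hlt
    have h2 : ψ b < ψ a := hanti t a ha.2 b hb.2 hlt
    linarith
  · have h1 : ψ b < ψ a := hS hb.1 ha.1 hlt
    have h2 : ψ a < ψ b := hanti t b hb.2 a ha.2 hlt
    linarith

lemma norm_le_card (hanti : ∀ t, ∀ a ∈ K t, ∀ b ∈ K t, a < b → ψ b < ψ a) (E : Finset ℕ+) :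
    combNorm (sierCliquesQ ψ) (xfun K E) ≤ (E.card : ℝ≥0∞) := by
  apply combNorm_le
  intro S hS
  rw [sum_abs_x]
  have h1 : ∑ t ∈ E, ((S ∩ K t).card : ℝ) ≤ ∑ t ∈ E, (1 : ℝ) := by
    apply Finset.sum_le_sum
    intro t ht
    exact_mod_cast inter_card_le_one hanti hS t
  calc ENNReal.ofReal (∑ t ∈ E, ((S ∩ K t).card : ℝ))
      ≤ ENNReal.ofReal (∑ t ∈ E, (1 : ℝ)) := ENNReal.ofReal_le_ofReal h1
    _ = (E.card : ℝ≥0∞) := by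
        rw [Finset.sum_const, nsmul_eq_mul, mul_one, ENNReal.ofReal_natCast]

lemma norm_ge_card (E : Finset ℕ+) (p : ℕ+ → ℕ) (hp : ∀ t ∈ E, p t ∈ K t)
    (hord : ∀ s ∈ E, ∀ t ∈ E, s < t → p s < p t ∧ ψ (p s) < ψ (p t)) :
    (E.card : ℝ≥0∞) ≤ combNorm (sierCliquesQ ψ) (xfun K E) := by
  have hclique : E.image p ∈ sierCliquesQ ψ := by
    intro x hx y hy hxy
    simp only [Finset.coe_image, Set.mem_image, Finset.mem_coe] at hx hy
    obtain ⟨s, hs, rfl⟩ := hx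
    obtain ⟨t, ht, rfl⟩ := hy
    rcases lt_trichotomy s t with h | h | h
    · exact (hord s hs t ht h).2
    · subst h; exact absurd hxy (lt_irrefl _)
    · exact absurd (hord t ht s hs h).1 (not_lt.mpr hxy.le)
  refine le_trans ?_ (le_combNorm hclique)
  rw [sum_abs_x]
  have h1 : ∀ t ∈ E, (1 : ℝ) ≤ ((E.image p ∩ K t).card : ℝ) := by
    intro t ht
    have hm : p t ∈ E.image p ∩ K t :=
      Finset.mem_inter.mpr ⟨Finset.mem_image_of_mem p ht, hp t ht⟩
    have := Finset.card_pos.mpr ⟨_, hm⟩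
    exact_mod_cast this
  calc (E.card : ℝ≥0∞) = ENNReal.ofReal (∑ t ∈ E, (1 : ℝ)) := by
        rw [Finset.sum_const, nsmul_eq_mul, mul_one, ENNReal.ofReal_natCast]
    _ ≤ ENNReal.ofReal (∑ t ∈ E, ((E.image p ∩ K t).card : ℝ)) :=
        ENNReal.ofReal_le_ofReal (Finset.sum_le_sum h1)

lemma norm_attained (hanti : ∀ t, ∀ a ∈ K t, ∀ b ∈ K t, a < b → ψ b < ψ a)
    (hKinc : ∀ s t : ℕ+, s < t → ∀ a ∈ K s, ∀ b ∈ K t, a < b)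
    {E : Finset ℕ+} (hE : E.Nonempty)
    (h : combNorm (sierCliquesQ ψ) (xfun K E) = (E.card : ℝ≥0∞)) :
    ∃ p : ℕ+ → ℕ, (∀ t ∈ E, p t ∈ K t) ∧
      ∀ s ∈ E, ∀ t ∈ E, s < t → p s < p t ∧ ψ (p s) < ψ (p t) := by
  have hcard : 1 ≤ E.card := Finset.card_pos.mpr hE
  have hex : ∃ S ∈ sierCliquesQ ψ, ∀ t ∈ E, (S ∩ K t).Nonempty := by
    by_contra hc
    push_neg at hc
    have hb : combNorm (sierCliquesQ ψ) (xfun K E) ≤ ((E.card - 1 : ℕ) : ℝ≥0∞) := by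
      apply combNorm_le
      intro S hS
      rw [sum_abs_x]
      obtain ⟨t0, ht0, h0⟩ := hc S hS
      have hnat : ∑ t ∈ E, (S ∩ K t).card ≤ E.card - 1 := by
        have hsplit : ∑ t ∈ E.erase t0, (S ∩ K t).card + (S ∩ K t0).card
            = ∑ t ∈ E, (S ∩ K t).card := Finset.sum_erase_add E _ ht0
        have hbound : ∑ t ∈ E.erase t0, (S ∩ K t).card ≤ ∑ t ∈ E.erase t0, 1 :=
          Finset.sum_le_sum fun t _ => inter_card_le_one hanti hS t
        rw [Finset.sum_const, smul_eq_mul, mul_one, Finset.card_erase_of_mem ht0] at hbound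
        rw [h0, Finset.card_empty] at hsplit
        omega
      calc ENNReal.ofReal (∑ t ∈ E, ((S ∩ K t).card : ℝ))
          = ((∑ t ∈ E, (S ∩ K t).card : ℕ) : ℝ≥0∞) := by
            rw [Nat.cast_sum, ENNReal.ofReal_sum_of_nonneg]
            · norm_cast
            · intro t _; positivity
        _ ≤ ((E.card - 1 : ℕ) : ℝ≥0∞) := by exact_mod_cast hnat
    rw [h] at hb
    have : E.card ≤ E.card - 1 := by exact_mod_cast hb
    omega
  obtain ⟨S, hS, hone⟩ := hex
  classical
  refine ⟨fun t => if ht : (S ∩ K t).Nonempty then ht.choose else 0, ?_, ?_⟩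
  · intro t ht
    have hne := hone t ht
    simp only [dif_pos hne]
    exact (Finset.mem_inter.mp hne.choose_spec).2
  · intro s hs t ht hst
    have hnes := hone s hs
    have hnet := hone t ht
    simp only [dif_pos hnes, dif_pos hnet]
    obtain ⟨hS1, hK1⟩ := Finset.mem_inter.mp hnes.choose_spec
    obtain ⟨hS2, hK2⟩ := Finset.mem_inter.mp hnet.choose_spec
    have hlt : hnes.choose < hnet.choose := hKinc s t hst _ hK1 _ hK2
    exact ⟨hlt, hS hS1 hS2 hlt⟩

lemma norm_empty : combNorm (sierCliquesQ ψ) (xfun K ∅) = 0 := by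
  apply le_antisymm _ zero_le
  apply combNorm_le
  intro S hS
  rw [sum_abs_x]
  simp

lemma anti_of_singleton_norm (hinj : Function.Injective ψ) {t : ℕ+}
    (h1 : combNorm (sierCliquesQ ψ) (xfun K {t}) = (1 : ℝ≥0∞)) :
    ∀ a ∈ K t, ∀ b ∈ K t, a < b → ψ b < ψ a := by
  intro a ha b hb hab
  by_contra hc
  push_neg at hc
  have hab' : ψ a < ψ b :=
    lt_of_le_of_ne hc fun he => (Nat.ne_of_lt hab) (hinj he)
  have hclique : ({a, b} : Finset ℕ) ∈ sierCliquesQ ψ := by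
    intro x hx y hy hxy
    simp only [Finset.coe_insert, Set.mem_insert_iff, Finset.coe_singleton,
      Set.mem_singleton_iff] at hx hy
    rcases hx with rfl | rfl <;> rcases hy with rfl | rfl
    · exact absurd hxy (lt_irrefl _)
    · exact hab'
    · exact absurd hxy (by omega)
    · exact absurd hxy (lt_irrefl _)
  have hle := le_combNorm (x := xfun K {t}) hclique
  rw [sum_abs_x, h1] at hle
  have hinter : ({a, b} : Finset ℕ) ∩ K t = {a, b} := by
    rw [Finset.inter_eq_left]
    intro x hx
    rcases Finset.mem_insert.mp hx with rfl | hx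
    · exact ha
    · rw [Finset.mem_singleton] at hx; subst hx; exact hb
  rw [Finset.sum_singleton, hinter] at hle
  have hcard2 : ({a, b} : Finset ℕ).card = 2 := by
    rw [Finset.card_insert_of_notMem (by simp [Nat.ne_of_lt hab]), Finset.card_singleton]
  rw [hcard2] at hle
  norm_num at hle

end Norm

end Stmt14Aux


theorem stmt_14 (F : Set (Finset ℕ+)) (hF : FHC F) (I : ℕ+ → Finset ℕ) (θ : ℕ → ℚ)
    (hem : Emulates I θ F)
    (hinc : ∀ n m : ℕ+, n < m → ∀ a ∈ I n, ∀ b ∈ I m, a < b) :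
    ∃ (J : ℕ+ → Finset ℕ) (θ' : ℕ → ℚ), Emulates J θ' (SchreierOp F) ∧
      ∀ n m : ℕ+, n < m → ∀ a ∈ J n, ∀ b ∈ J m, a < b := by
  classical
  obtain ⟨hne, hint, hdisj, hinj, hiff⟩ := hem
  have hanti_I : ∀ t, ∀ a ∈ I t, ∀ b ∈ I t, a < b → θ b < θ a := by
    intro t
    apply Stmt14Aux.anti_of_singleton_norm hinj
    have h := (hiff {t}).mpr (hF.2 t)
    rw [show ((({t} : Finset ℕ+)).card : ℝ≥0∞) = 1 by simp] at h
    exact h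
  refine ⟨Stmt14Aux.J I, Stmt14Aux.theta' I θ, ⟨Stmt14Aux.J_nonempty hne,
    Stmt14Aux.J_interval, Stmt14Aux.J_disjoint hne,
    Stmt14Aux.theta'_injective hne hinj hdisj, ?_⟩, Stmt14Aux.J_incr hne⟩
  intro E
  show combNorm (sierCliquesQ (Stmt14Aux.theta' I θ)) (Stmt14Aux.xfun (Stmt14Aux.J I) E)
      = (E.card : ℝ≥0∞) ↔ _
  have hanti_J : ∀ t, ∀ a ∈ Stmt14Aux.J I t, ∀ b ∈ Stmt14Aux.J I t, a < b →
      Stmt14Aux.theta' I θ b < Stmt14Aux.theta' I θ a := fun t a ha b hb h =>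
    Stmt14Aux.theta'_anti hne hinj ha hb h
  constructor
  · -- norm = card → SchreierOp
    intro hnorm
    rcases E.eq_empty_or_nonempty with rfl | hE
    · exact Or.inl rfl
    right
    obtain ⟨p, hp, hord⟩ :=
      Stmt14Aux.norm_attained hanti_J (Stmt14Aux.J_incr hne) hE hnorm
    have hdec : ∀ t : ℕ+, ∃ k a, t ∈ E →
        (1 ≤ k ∧ k ≤ (t : ℕ)) ∧ a ∈ I t ∧
          Stmt14Aux.theta' I θ (p t) = Stmt14Aux.v k (θ a) := by
      intro t
      by_cases ht : t ∈ E
      · obtain ⟨k, hk, a, ha, hv⟩ :=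
          Stmt14Aux.W_mem_decode (Stmt14Aux.theta'_mem_W hne hinj (hp t ht))
        exact ⟨k, a, fun _ => ⟨hk, ha, hv⟩⟩
      · exact ⟨0, 0, fun h => absurd h ht⟩
    choose kf af hspec using hdec
    have hdich : ∀ s ∈ E, ∀ t ∈ E, s < t →
        kf t < kf s ∨ (kf s = kf t ∧ θ (af s) < θ (af t)) := by
      intro s hs t ht hst
      have h1 := (hord s hs t ht hst).2
      rw [(hspec s hs).2.2, (hspec t ht).2.2] at h1
      exact (Stmt14Aux.v_lt_v).mp h1
    have hs0 : 0 < (E.image kf).card := Finset.card_pos.mpr (hE.image kf)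
    set e := (E.image kf).orderIsoOfFin rfl with he
    refine ⟨(E.image kf).card, hs0,
      fun j => E.filter (fun t => kf t = (e j.rev : ℕ)), ?_, ?_, ?_, ?_⟩
    · intro j
      have hnonempty : (E.filter (fun t => kf t = (e j.rev : ℕ))).Nonempty := by
        have hmem : ((e j.rev : ℕ)) ∈ E.image kf := (e j.rev).2
        rw [Finset.mem_image] at hmem
        obtain ⟨t, ht, hkt⟩ := hmem
        exact ⟨t, Finset.mem_filter.mpr ⟨ht, hkt⟩⟩
      refine ⟨?_, hnonempty⟩
      apply (hiff _).mp
      apply le_antisymm (Stmt14Aux.norm_le_card hanti_I _)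
      apply Stmt14Aux.norm_ge_card _ af
      · intro t ht
        exact (hspec t (Finset.mem_filter.mp ht).1).2.1
      · intro s hs t ht hst
        obtain ⟨hsE, hks⟩ := Finset.mem_filter.mp hs
        obtain ⟨htE, hkt⟩ := Finset.mem_filter.mp ht
        have haf : af s < af t :=
          hinc s t hst _ ((hspec s hsE).2.1) _ ((hspec t htE).2.1)
        refine ⟨haf, ?_⟩
        rcases hdich s hsE t htE hst with h | h
        · omega
        · exact h.2
    · intro k l hkl a ha b hb
      obtain ⟨haE, hka⟩ := Finset.mem_filter.mp ha
      obtain ⟨hbE, hkb⟩ := Finset.mem_filter.mp hb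
      have hrev : l.rev < k.rev := by rw [Fin.rev_lt_rev]; exact hkl
      have hlt : ((e l.rev : ℕ)) < ((e k.rev : ℕ)) :=
        Subtype.coe_lt_coe.mpr (e.strictMono hrev)
      rcases lt_trichotomy a b with h | h | h
      · exact h
      · exfalso; subst h; omega
      · exfalso
        rcases hdich b hbE a haE h with hcase | hcase
        · omega
        · omega
    · intro a ha
      obtain ⟨haE, hka⟩ := Finset.mem_filter.mp ha
      have h1 : kf a ≤ (a : ℕ) := (hspec a haE).1.2
      have h2 : (E.image kf).card ≤ kf a := by
        have hsub : E.image kf ⊆ Finset.Icc 1 (kf a) := by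
          intro x hx
          rw [Finset.mem_image] at hx
          obtain ⟨u, huE, rfl⟩ := hx
          rw [Finset.mem_Icc]
          refine ⟨(hspec u huE).1.1, ?_⟩
          have hmem : kf u ∈ E.image kf := Finset.mem_image_of_mem kf huE
          have hidx : (e.symm ⟨kf u, hmem⟩) ≤ (⟨0, hs0⟩ : Fin (E.image kf).card).rev := by
            rw [Fin.le_def, Fin.val_rev]
            have h0 : ((⟨0, hs0⟩ : Fin (E.image kf).card)).val = 0 := rfl
            rw [h0]
            have := (e.symm ⟨kf u, hmem⟩).isLt
            omega
          have hle := e.monotone hidx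
          rw [OrderIso.apply_symm_apply] at hle
          have hle' : kf u ≤ ((e (⟨0, hs0⟩ : Fin (E.image kf).card).rev : ℕ)) :=
            Subtype.coe_le_coe.mpr hle
          exact le_trans hle' (le_of_eq hka.symm)
        calc (E.image kf).card ≤ (Finset.Icc 1 (kf a)).card := Finset.card_le_card hsub
          _ = kf a := by rw [Nat.card_Icc]; omega
      omega
    · apply Finset.ext
      intro t
      rw [Finset.mem_biUnion]
      constructor
      · intro ht
        have hmem : kf t ∈ E.image kf := Finset.mem_image_of_mem kf ht
        refine ⟨(e.symm ⟨kf t, hmem⟩).rev, Finset.mem_univ _,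
          Finset.mem_filter.mpr ⟨ht, ?_⟩⟩
        rw [Fin.rev_rev, OrderIso.apply_symm_apply]
      · rintro ⟨j, _, hj⟩
        exact (Finset.mem_filter.mp hj).1
  · -- SchreierOp → norm = card
    intro hSch
    rcases hSch with rfl | ⟨m, hm, Fs, hFs, hord, hmin, hEeq⟩
    · simpa using Stmt14Aux.norm_empty (K := Stmt14Aux.J I)
    subst hEeq
    apply le_antisymm (Stmt14Aux.norm_le_card hanti_J _)
    -- representatives within each block, from the original emulation
    have hblock : ∀ j : Fin m, ∃ q : ℕ+ → ℕ, (∀ t ∈ Fs j, q t ∈ I t) ∧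
        ∀ s ∈ Fs j, ∀ t ∈ Fs j, s < t → q s < q t ∧ θ (q s) < θ (q t) := fun j =>
      Stmt14Aux.norm_attained hanti_I hinc (hFs j).2 ((hiff (Fs j)).mpr (hFs j).1)
    choose q hqI hqord using hblock
    -- block index of each point
    have hjdx' : ∀ t : ℕ+, ∃ j : Fin m, t ∈ Finset.univ.biUnion Fs → t ∈ Fs j := by
      intro t
      by_cases ht : t ∈ Finset.univ.biUnion Fs
      · obtain ⟨j, _, hj⟩ := Finset.mem_biUnion.mp ht
        exact ⟨j, fun _ => hj⟩
      · exact ⟨⟨0, hm⟩, fun h => absurd h ht⟩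
    choose jdx hjdxmem using hjdx'
    have hmle : ∀ t ∈ Finset.univ.biUnion Fs, m ≤ (t : ℕ) := by
      intro t ht
      obtain ⟨j, _, hj⟩ := Finset.mem_biUnion.mp ht
      rcases Nat.eq_zero_or_pos (j : ℕ) with h0 | h0
      · have hj0 : j = ⟨0, hm⟩ := Fin.ext h0
        exact hmin t (hj0 ▸ hj)
      · obtain ⟨a0, ha0⟩ := (hFs ⟨0, hm⟩).2
        have hlt : a0 < t := hord ⟨0, hm⟩ j (by rw [Fin.lt_def]; exact h0) a0 ha0 t hj
        have h1 := hmin a0 ha0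
        have h2 : (a0 : ℕ) < (t : ℕ) := hlt
        omega
    -- the new representatives
    have hrep' : ∀ t : ℕ+, ∃ i : ℕ, t ∈ Finset.univ.biUnion Fs →
        i ∈ Stmt14Aux.J I t ∧ Stmt14Aux.theta' I θ i
          = Stmt14Aux.v (m - (jdx t : ℕ)) (θ (q (jdx t) t)) := by
      intro t
      by_cases ht : t ∈ Finset.univ.biUnion Fs
      · have hw : Stmt14Aux.v (m - (jdx t : ℕ)) (θ (q (jdx t) t)) ∈ Stmt14Aux.W I θ t := by
          apply Stmt14Aux.W_mem_encode
          · have := (jdx t).isLt; omega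
          · have := hmle t ht; omega
          · exact hqI (jdx t) t (hjdxmem t ht)
        obtain ⟨i, hi, hv⟩ := Stmt14Aux.theta'_surjOn hne hinj hw
        exact ⟨i, fun _ => ⟨hi, hv⟩⟩
      · exact ⟨0, fun h => absurd h ht⟩
    choose p hpspec using hrep'
    apply Stmt14Aux.norm_ge_card _ p
    · intro t ht
      exact (hpspec t ht).1
    · intro s hs t ht hst
      have hps := hpspec s hs
      have hpt := hpspec t ht
      refine ⟨Stmt14Aux.J_incr hne s t hst _ hps.1 _ hpt.1, ?_⟩
      rw [hps.2, hpt.2, Stmt14Aux.v_lt_v]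
      have hsmem := hjdxmem s hs
      have htmem := hjdxmem t ht
      have hjle : ((jdx s : ℕ)) ≤ ((jdx t : ℕ)) := by
        by_contra hc
        push_neg at hc
        have h1 : t < s := hord (jdx t) (jdx s) (by rw [Fin.lt_def]; exact hc) t htmem s hsmem
        exact absurd (lt_trans h1 hst) (lt_irrefl t)
      rcases eq_or_lt_of_le hjle with hje | hjl
      · have hjeq : jdx s = jdx t := Fin.ext hje
        rw [hjeq]
        rw [hjeq] at hsmem
        exact Or.inr ⟨rfl, (hqord (jdx t) s hsmem t htmem hst).2⟩
      · have := (jdx t).isLt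
        exact Or.inl (by omega)
end

section
/- Suppose that for each k ∈ ℕ the family 𝓕_k ∈ FHC(ℕ) (where ℕ = {1,2,3,…}) has an emulation ((I^k_n)_{n∈ℕ}, θ_k) with increasingly ordered intervals I^k_1 < I^k_2 < ⋯. Then the diagonal family 𝐃*((𝓕_k)_k) also has an emulation ((J_n)_{n∈ℕ}, θ*) with J_1 < J_2 < ⋯. -/
open scoped ENNReal

/-- The diagonal operation `𝐃*` on sequences of families of finite subsets of
`ℕ+ = {1,2,3,…}`:
`𝐃*((𝓕_k)_k) = {∅} ∪ { F₁ ∪ ⋯ ∪ F_m : F_k ∈ 𝓕_k ∖ {∅}, m ≤ min F_m, F_m < ⋯ < F₁ }`. -/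
def DStarOp (Fam : ℕ+ → Set (Finset ℕ+)) : Set (Finset ℕ+) :=
  {E | E = ∅ ∨ ∃ (m : ℕ) (hm : 0 < m) (Fs : Fin m → Finset ℕ+),
    (∀ k : Fin m, Fs k ∈ Fam ⟨k.val + 1, Nat.succ_pos _⟩ ∧ (Fs k).Nonempty) ∧
    (∀ k l : Fin m, k < l → ∀ a ∈ Fs l, ∀ b ∈ Fs k, a < b) ∧
    (∀ a ∈ Fs ⟨m - 1, Nat.sub_lt hm Nat.one_pos⟩, m ≤ (a : ℕ)) ∧
    E = Finset.univ.biUnion Fs}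

namespace St15


/-- partial sums -/
def psum (c : ℕ → ℕ) : ℕ → ℕ
  | 0 => 0
  | n+1 => psum c n + c n

lemma psum_mono (c : ℕ → ℕ) : Monotone (psum c) := by
  apply monotone_nat_of_le_succ
  intro n; simp [psum]

lemma psum_lt_psum (c : ℕ → ℕ) (hc : ∀ n, 0 < c n) {a b : ℕ} (h : a < b) :
    psum c a < psum c b := by
  calc psum c a < psum c (a+1) := by simp [psum]; exact hc a
  _ ≤ psum c b := psum_mono c h

lemma self_lt_psum (c : ℕ → ℕ) (hc : ∀ n, 0 < c n) (n : ℕ) : n < psum c (n+1) := by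
  induction n with
  | zero => simp [psum]; exact hc 0
  | succ n ih => have := hc (n+1); simp [psum] at *; omega

/-- the index of the layer containing `j` -/
def layer (c : ℕ → ℕ) (j : ℕ) : ℕ := Nat.findGreatest (fun k => psum c k ≤ j) j

lemma layer_spec₁ (c : ℕ → ℕ) (j : ℕ) : psum c (layer c j) ≤ j :=
  Nat.findGreatest_spec (P := fun k => psum c k ≤ j) (Nat.zero_le j) (by simp [psum])

lemma layer_spec₂ (c : ℕ → ℕ) (hc : ∀ n, 0 < c n) (j : ℕ) : j < psum c (layer c j + 1) := by
  by_contra h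
  push_neg at h
  have hle : layer c j + 1 ≤ j := by
    have := self_lt_psum c hc j
    by_contra h2
    push_neg at h2
    have : layer c j = j := le_antisymm (Nat.findGreatest_le j) (by omega)
    rw [this] at h
    omega
  exact Nat.findGreatest_is_greatest (P := fun k => psum c k ≤ j) (Nat.lt_succ_self _) hle h

lemma le_layer (c : ℕ → ℕ) (hc : ∀ n, 0 < c n) {k j : ℕ} (h : psum c k ≤ j) : k ≤ layer c j := by
  by_contra h2
  push_neg at h2
  have := layer_spec₂ c hc j
  have : psum c (layer c j + 1) ≤ psum c k := psum_mono c (by omega)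
  omega

lemma layer_eq (c : ℕ → ℕ) (hc : ∀ n, 0 < c n) {k j : ℕ}
    (h1 : psum c k ≤ j) (h2 : j < psum c (k+1)) : layer c j = k := by
  have h3 := le_layer c hc h1
  by_contra h4
  have h5 : k + 1 ≤ layer c j := by omega
  have := psum_mono c h5
  have := layer_spec₁ c j
  omega

lemma layer_mono (c : ℕ → ℕ) (hc : ∀ n, 0 < c n) {j j' : ℕ} (h : j ≤ j') :
    layer c j ≤ layer c j' :=
  le_layer c hc (le_trans (layer_spec₁ c j) h)

lemma layer_le (c : ℕ → ℕ) (hc : ∀ n, 0 < c n) {j b : ℕ} (h : j < psum c (b+1)) :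
    layer c j ≤ b := by
  by_contra h2
  push_neg at h2
  have : psum c (b+1) ≤ psum c (layer c j) := psum_mono c (by omega)
  have := layer_spec₁ c j
  omega

/-- strictly monotone map `ℚ → (0,1) ∩ ℚ` -/
def gQ (q : ℚ) : ℚ := (1 + q / (1 + |q|)) / 2

lemma gQ_pos (q : ℚ) : 0 < gQ q := by
  have h1 : |q| < 1 + |q| := by linarith [abs_nonneg q]
  have h2 : -(1:ℚ) < q / (1 + |q|) := by
    rw [neg_lt, ← neg_div]
    rw [div_lt_one (by linarith [abs_nonneg q])]
    have := neg_abs_le q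
    linarith
  unfold gQ; linarith

lemma gQ_lt_one (q : ℚ) : gQ q < 1 := by
  have h2 : q / (1 + |q|) < 1 := by
    rw [div_lt_one (by linarith [abs_nonneg q])]
    have := le_abs_self q
    linarith
  unfold gQ; linarith

lemma gQ_strictMono : StrictMono gQ := by
  intro a b hab
  unfold gQ
  have ha : (0:ℚ) < 1 + |a| := by linarith [abs_nonneg a]
  have hb : (0:ℚ) < 1 + |b| := by linarith [abs_nonneg b]
  have key : a / (1 + |a|) < b / (1 + |b|) := by
    rw [div_lt_div_iff₀ ha hb]
    rcases abs_cases a with ⟨h1, h2⟩ | ⟨h1, h2⟩ <;>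
      rcases abs_cases b with ⟨h3, h4⟩ | ⟨h3, h4⟩ <;> nlinarith
  linarith

/-- level function: `fQ l q ∈ (-l, -l+1)` -/
def fQ (l : ℕ) (q : ℚ) : ℚ := gQ q - l

lemma fQ_strictMono (l : ℕ) : StrictMono (fQ l) := fun a b h => by
  unfold fQ; have := gQ_strictMono h; linarith

lemma fQ_lt_fQ {l l' : ℕ} (h : l' < l) (x y : ℚ) : fQ l x < fQ l' y := by
  unfold fQ
  have h1 := gQ_lt_one x
  have h2 := gQ_pos y
  have : (l':ℚ) + 1 ≤ (l:ℚ) := by exact_mod_cast Nat.succ_le_of_lt h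
  linarith

lemma fQ_eq_iff {l l' : ℕ} {x y : ℚ} (h : fQ l x = fQ l' y) : l = l' ∧ gQ x = gQ y := by
  rcases lt_trichotomy l l' with h1 | h1 | h1
  · exact absurd h (ne_of_gt (fQ_lt_fQ h1 y x))
  · subst h1; constructor; rfl; unfold fQ at h; linarith
  · exact absurd h (ne_of_lt (fQ_lt_fQ h1 x y))


/-- the `j` smallest elements of a finite set of `ℕ+` -/
def tks : ℕ → Finset ℕ+ → Finset ℕ+
  | 0, _ => ∅
  | j+1, A => if h : A.Nonempty then insert (A.min' h) (tks j (A.erase (A.min' h))) else ∅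

lemma tks_subset (j : ℕ) (A : Finset ℕ+) : tks j A ⊆ A := by
  induction j generalizing A with
  | zero => simp [tks]
  | succ j ih =>
    unfold tks
    split
    · next h =>
      intro x hx
      rcases Finset.mem_insert.1 hx with h1 | h1
      · rw [h1]; exact A.min'_mem h
      · exact Finset.erase_subset _ _ (ih _ h1)
    · simp

lemma tks_card (j : ℕ) (A : Finset ℕ+) (h : j ≤ A.card) : (tks j A).card = j := by
  induction j generalizing A with
  | zero => simp [tks]
  | succ j ih =>
    have hne : A.Nonempty := Finset.card_pos.1 (by omega)
    unfold tks
    rw [dif_pos hne]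
    rw [Finset.card_insert_of_notMem]
    · rw [ih]
      have := Finset.card_erase_of_mem (A.min'_mem hne)
      omega
    · intro hmem
      exact (Finset.notMem_erase _ _) (tks_subset _ _ hmem)

lemma tks_lt (j : ℕ) (A : Finset ℕ+) {x y : ℕ+} (hx : x ∈ tks j A)
    (hy : y ∈ A) (hy2 : y ∉ tks j A) : x < y := by
  induction j generalizing A with
  | zero => simp [tks] at hx
  | succ j ih =>
    unfold tks at hx hy2
    rcases (em A.Nonempty) with h | h
    · rw [dif_pos h] at hx hy2
      rw [Finset.mem_insert] at hx hy2
      push_neg at hy2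
      obtain ⟨hy2a, hy2b⟩ := hy2
      rcases hx with h1 | h1
      · rw [h1]
        exact lt_of_le_of_ne (A.min'_le y hy) (fun he => hy2a he.symm)
      · exact ih _ h1 (Finset.mem_erase.2 ⟨hy2a, hy⟩) hy2b
    · rw [dif_neg h] at hx; simp at hx



def GoodPieces (Fam : ℕ+ → Set (Finset ℕ+)) {t : ℕ} (Fs : Fin t → Finset ℕ+)
    (E : Finset ℕ+) : Prop :=
  (∀ k, Fs k ∈ Fam k.val.succPNat ∧ (Fs k).Nonempty) ∧
  (∀ k l : Fin t, k < l → ∀ a ∈ Fs l, ∀ b ∈ Fs k, a < b) ∧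
  E = Finset.univ.biUnion Fs

variable {Fam : ℕ+ → Set (Finset ℕ+)}

lemma exists_lastCases {t : ℕ} (P : Fin (t+1) → Prop) :
    (∃ k, P k) ↔ P (Fin.last t) ∨ ∃ j : Fin t, P j.castSucc := by
  constructor
  · rintro ⟨k, hk⟩
    induction k using Fin.lastCases with
    | last => exact Or.inl hk
    | cast j => exact Or.inr ⟨j, hk⟩
  · rintro (h | ⟨j, hj⟩)
    · exact ⟨_, h⟩
    · exact ⟨_, hj⟩

lemma glue {t : ℕ} (P : Finset ℕ+) (Fs' : Fin t → Finset ℕ+) (E' : Finset ℕ+)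
    (hG : GoodPieces Fam Fs' E') (hP1 : P ∈ Fam t.succPNat) (hP2 : P.Nonempty)
    (hsep : ∀ a ∈ P, ∀ b ∈ E', a < b) :
    GoodPieces Fam (Fin.lastCases P Fs') (P ∪ E') := by
  obtain ⟨hG1, hG2, hG3⟩ := hG
  have hsub : ∀ j : Fin t, Fs' j ⊆ E' := by
    intro j x hx
    rw [hG3]
    exact Finset.mem_biUnion.2 ⟨j, Finset.mem_univ j, hx⟩
  refine ⟨?_, ?_, ?_⟩
  · intro k
    induction k using Fin.lastCases with
    | last => simpa using ⟨hP1, hP2⟩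
    | cast j => simpa using hG1 j
  · intro k l hkl a ha b hb
    induction l using Fin.lastCases with
    | last =>
      induction k using Fin.lastCases with
      | last => exact absurd hkl (lt_irrefl _)
      | cast j =>
        simp only [Fin.lastCases_last] at ha
        simp only [Fin.lastCases_castSucc] at hb
        exact hsep a ha b (hsub j hb)
    | cast j' =>
      induction k using Fin.lastCases with
      | last => exact absurd (hkl.trans (Fin.castSucc_lt_last j')) (lt_irrefl _)
      | cast j =>
        simp only [Fin.lastCases_castSucc] at ha hb
        exact hG2 j j' (by exact_mod_cast hkl) a ha b hb
  · ext x
    simp only [Finset.mem_union, Finset.mem_biUnion, Finset.mem_univ, true_and]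
    constructor
    · rintro (h | h)
      · exact ⟨Fin.last t, by simpa using h⟩
      · rw [hG3] at h
        rcases Finset.mem_biUnion.1 h with ⟨j, _, hj⟩
        exact ⟨j.castSucc, by simpa using hj⟩
    · rintro ⟨k, hk⟩
      induction k using Fin.lastCases with
      | last => exact Or.inl (by simpa using hk)
      | cast j => exact Or.inr (hsub j (by simpa using hk))

lemma singles (hsing : ∀ (x : ℕ+) (v : ℕ+), {x} ∈ Fam v) :
    ∀ (t : ℕ) (E : Finset ℕ+), E.card = t →
      ∃ Fs : Fin t → Finset ℕ+, GoodPieces Fam Fs E ∧ ∀ k, ∃ x, Fs k = {x} := by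
  intro t
  induction t with
  | zero =>
    intro E hE
    refine ⟨Fin.elim0, ⟨?_, ?_, ?_⟩, ?_⟩
    · intro k; exact k.elim0
    · intro k; exact k.elim0
    · rw [Finset.card_eq_zero.1 hE]; simp
    · intro k; exact k.elim0
  | succ t ih =>
    intro E hE
    have hne : E.Nonempty := Finset.card_pos.1 (by omega)
    set M := E.max' hne with hM
    have hMe : M ∈ E := E.max'_mem hne
    obtain ⟨Fs', ⟨h1, h2, h3⟩, h4⟩ := ih (E.erase M) (by rw [Finset.card_erase_of_mem hMe]; omega)
    refine ⟨Fin.cases {M} Fs', ⟨?_, ?_, ?_⟩, ?_⟩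
    · intro k
      induction k using Fin.cases with
      | zero => simpa using hsing M _
      | succ j =>
        obtain ⟨x, hx⟩ := h4 j
        have hne' := (h1 j).2
        simp only [Fin.cases_succ]
        rw [hx]
        exact ⟨hsing x _, Finset.singleton_nonempty x⟩
    · intro k l hkl a ha b hb
      induction l using Fin.cases with
      | zero => exact absurd hkl (Nat.not_lt_zero _)
      | succ j' =>
        simp only [Fin.cases_succ] at ha
        have haE : a ∈ E.erase M := by
          rw [h3]; exact Finset.mem_biUnion.2 ⟨j', Finset.mem_univ _, ha⟩
        induction k using Fin.cases with
        | zero =>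
          simp only [Fin.cases_zero, Finset.mem_singleton] at hb
          rw [hb]
          rcases Finset.mem_erase.1 haE with ⟨hne2, haE2⟩
          exact lt_of_le_of_ne (E.le_max' a haE2) hne2
        | succ j =>
          simp only [Fin.cases_succ] at hb
          exact h2 j j' (Fin.succ_lt_succ_iff.1 hkl) a ha b hb
    · ext x
      simp only [Finset.mem_biUnion, Finset.mem_univ, true_and]
      rw [Fin.exists_fin_succ]
      simp only [Fin.cases_zero, Fin.cases_succ, Finset.mem_singleton]
      constructor
      · intro hx
        by_cases hxM : x = M
        · exact Or.inl hxM
        · have hxe : x ∈ E.erase M := Finset.mem_erase.2 ⟨hxM, hx⟩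
          rw [h3] at hxe
          rcases Finset.mem_biUnion.1 hxe with ⟨j, _, hj⟩
          exact Or.inr ⟨j, hj⟩
      · rintro (rfl | ⟨j, hj⟩)
        · exact hMe
        · have hxe : x ∈ E.erase M := by
            rw [h3]; exact Finset.mem_biUnion.2 ⟨j, Finset.mem_univ _, hj⟩
          exact (Finset.mem_erase.1 hxe).2
    · intro k
      induction k using Fin.cases with
      | zero => exact ⟨M, rfl⟩
      | succ j => simpa using h4 j


lemma pieces_exist (hsing : ∀ (x : ℕ+) (v : ℕ+), {x} ∈ Fam v) :
    ∀ (t : ℕ) (E : Finset ℕ+) (lev : ℕ+ → ℕ) (hne : E.Nonempty),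
      (∀ n ∈ E, 1 ≤ lev n) →
      (∀ m ∈ E, ∀ n ∈ E, m < n → lev n ≤ lev m) →
      (∀ (v : ℕ) (hv : 0 < v) (G : Finset ℕ+), G ⊆ E → (∀ n ∈ G, lev n = v) →
        G ∈ Fam ⟨v, hv⟩) →
      1 ≤ t → t ≤ E.card → lev (E.min' hne) ≤ t →
      ∃ Fs : Fin t → Finset ℕ+, GoodPieces Fam Fs E := by
  intro t
  induction t with
  | zero => intro E lev hne _ _ _ ht1; omega
  | succ t ih =>
    intro E lev hne hlev1 hmono hcls ht1 ht2 ht3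
    have hμE : E.min' hne ∈ E := E.min'_mem hne
    rcases Nat.eq_zero_or_pos t with rfl | htpos
    · -- a single piece: every level equals 1
      have hall : ∀ n ∈ E, lev n = 1 := by
        intro n hn
        have h1 := hlev1 n hn
        rcases eq_or_lt_of_le (E.min'_le n hn) with h2 | h2
        · rw [← h2] at *; omega
        · have := hmono _ hμE n hn h2
          omega
      refine ⟨fun _ => E, ?_, ?_, ?_⟩
      · intro k
        have hk : k = 0 := Fin.ext (by omega)
        subst hk
        exact ⟨hcls 1 Nat.one_pos E (subset_refl E) hall, hne⟩
      · intro k l hkl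
        have hk : k = 0 := Fin.ext (by omega)
        have hl : l = 0 := Fin.ext (by omega)
        subst hk; subst hl
        exact absurd hkl (lt_irrefl _)
      · ext x
        simp only [Finset.mem_biUnion, Finset.mem_univ, true_and]
        exact ⟨fun hx => ⟨0, hx⟩, fun ⟨_, hx⟩ => hx⟩
    · by_cases hbr : lev (E.min' hne) ≤ t
      · -- top piece is the singleton {min}
        set μ := E.min' hne with hμdef
        set E' := E.erase μ with hE'def
        have hcard' : E'.card = E.card - 1 := Finset.card_erase_of_mem hμE
        have hne' : E'.Nonempty := Finset.card_pos.1 (by omega)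
        have hsubE' : E' ⊆ E := Finset.erase_subset _ _
        have hμlt : ∀ b ∈ E', μ < b := by
          intro b hb
          rcases Finset.mem_erase.1 hb with ⟨hb1, hb2⟩
          exact lt_of_le_of_ne (E.min'_le b hb2) (Ne.symm hb1)
        obtain ⟨Fs', hG⟩ := ih E' lev hne'
          (fun n hn => hlev1 n (hsubE' hn))
          (fun m hm n hn h => hmono m (hsubE' hm) n (hsubE' hn) h)
          (fun v hv G hG hlev => hcls v hv G (hG.trans hsubE') hlev)
          htpos (by omega)
          (by
            have h1 := hμlt _ (E'.min'_mem hne')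
            have h2 := hmono μ hμE _ (hsubE' (E'.min'_mem hne')) h1
            exact le_trans h2 hbr)
        have hglue := glue {μ} Fs' E' hG (hsing μ _) (Finset.singleton_nonempty μ)
          (by intro a ha b hb
              rw [Finset.mem_singleton] at ha
              rw [ha]; exact hμlt b hb)
        have hEeq : E = {μ} ∪ E' := by
          rw [← Finset.insert_eq, hE'def, Finset.insert_erase hμE]
        rw [hEeq]
        exact ⟨_, hglue⟩
      · -- lev (min) = t+1
        have hlevμ : lev (E.min' hne) = t + 1 := le_antisymm ht3 (by omega)
        set μ := E.min' hne with hμdef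
        set H := E.filter (fun n => lev n = t + 1) with hHdef
        have hHsub : H ⊆ E := Finset.filter_subset _ _
        have hμH : μ ∈ H := Finset.mem_filter.2 ⟨hμE, hlevμ⟩
        have hsepH : ∀ a ∈ H, ∀ b ∈ E \ H, a < b := by
          intro a ha b hb
          rcases Finset.mem_sdiff.1 hb with ⟨hbE, hbH⟩
          have haE := hHsub ha
          have hlevb : lev b ≤ t + 1 := by
            have hmin : μ ≤ b := by rw [hμdef]; exact E.min'_le b hbE
            rcases eq_or_lt_of_le hmin with h2 | h2
            · rw [← h2]; omega
            · have := hmono μ hμE b hbE h2; omega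
          rcases lt_trichotomy a b with h | h | h
          · exact h
          · exact absurd (h ▸ ha) hbH
          · have h3 := hmono b hbE a haE h
            have h4 := (Finset.mem_filter.1 ha).2
            have : lev b = t + 1 := by omega
            exact absurd (Finset.mem_filter.2 ⟨hbE, this⟩) hbH
        have hHFam : H ∈ Fam (t+1).toPNat' := by
          exact hcls (t+1) (Nat.succ_pos t) H hHsub (fun n hn => (Finset.mem_filter.1 hn).2)
        by_cases hca : t ≤ (E \ H).card
        · -- top piece is H
          set E' := E \ H with hE'def
          have hne' : E'.Nonempty := Finset.card_pos.1 (by omega)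
          have hsubE' : E' ⊆ E := Finset.sdiff_subset
          obtain ⟨Fs', hG⟩ := ih E' lev hne'
            (fun n hn => hlev1 n (hsubE' hn))
            (fun m hm n hn h => hmono m (hsubE' hm) n (hsubE' hn) h)
            (fun v hv G hG hlev => hcls v hv G (hG.trans hsubE') hlev)
            htpos hca
            (by
              have hm' : E'.min' hne' ∈ E' := E'.min'_mem hne'
              rcases Finset.mem_sdiff.1 hm' with ⟨hmE, hmH⟩
              have h2 : μ < E'.min' hne' := by
                have hmin : μ ≤ E'.min' hne' := by rw [hμdef]; exact E.min'_le _ hmE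
                rcases eq_or_lt_of_le hmin with h2 | h2
                · exact absurd (h2 ▸ hμH) hmH
                · exact h2
              have h3 := hmono μ hμE _ hmE h2
              have h4 : lev (E'.min' hne') ≠ t + 1 := by
                intro hc
                exact hmH (Finset.mem_filter.2 ⟨hmE, hc⟩)
              omega)
          have hglue := glue H Fs' E' hG hHFam ⟨μ, hμH⟩ hsepH
          have hEeq : E = H ∪ E' := (Finset.union_sdiff_of_subset hHsub).symm
          rw [hEeq]
          exact ⟨_, hglue⟩
        · -- big top piece inside H
          set P := tks (E.card - (t+1) + 1) E with hPdef
          have hPsub : P ⊆ E := tks_subset _ _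
          have hPcard : P.card = E.card - (t+1) + 1 := tks_card _ _ (by omega)
          have hPne : P.Nonempty := Finset.card_pos.1 (by omega)
          have hPH : P ⊆ H := by
            intro x hx
            by_contra hxH
            have hHP : H ⊆ P := by
              intro h' hh'
              by_contra h'P
              have h1 : x < h' := tks_lt _ _ hx (hHsub hh') h'P
              have h2 : h' < x := hsepH h' hh' x (Finset.mem_sdiff.2 ⟨hPsub hx, hxH⟩)
              exact absurd (h1.trans h2) (lt_irrefl _)
            have h1 : H ⊆ P.erase x := by
              intro h' hh'
              exact Finset.mem_erase.2 ⟨fun hc => hxH (hc ▸ hh'), hHP hh'⟩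
            have h2 := Finset.card_le_card h1
            have h3 := Finset.card_erase_of_mem hx
            have h4 := Finset.card_le_card hHsub
            have h5 : (E \ H).card = E.card - H.card := Finset.card_sdiff_of_subset hHsub
            omega
          have hPFam : P ∈ Fam (t+1).toPNat' :=
            hcls (t+1) (Nat.succ_pos t) P hPsub (fun n hn => (Finset.mem_filter.1 (hPH hn)).2)
          set E' := E \ P with hE'def
          have hcard' : E'.card = t := by
            rw [hE'def, Finset.card_sdiff_of_subset hPsub]
            omega
          obtain ⟨Fs', hG, _⟩ := singles hsing t E' hcard'
          have hglue := glue P Fs' E' hG hPFam hPne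
            (by
              intro a ha b hb
              rcases Finset.mem_sdiff.1 hb with ⟨hbE, hbP⟩
              exact tks_lt _ _ ha hbE hbP)
          have hEeq : E = P ∪ E' := (Finset.union_sdiff_of_subset hPsub).symm
          rw [hEeq]
          exact ⟨_, hglue⟩


lemma mem_DStar (hsing : ∀ (x : ℕ+) (v : ℕ+), {x} ∈ Fam v)
    (E : Finset ℕ+) (lev : ℕ+ → ℕ) (hne : E.Nonempty)
    (hlev1 : ∀ n ∈ E, 1 ≤ lev n) (hlev2 : ∀ n ∈ E, lev n ≤ (n : ℕ))
    (hmono : ∀ m ∈ E, ∀ n ∈ E, m < n → lev n ≤ lev m)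
    (hcls : ∀ (v : ℕ) (hv : 0 < v) (G : Finset ℕ+), G ⊆ E → (∀ n ∈ G, lev n = v) →
      G ∈ Fam ⟨v, hv⟩) :
    E ∈ DStarOp Fam := by
  have hmemE : ∀ {m : ℕ} (Fs : Fin m → Finset ℕ+), E = Finset.univ.biUnion Fs →
      ∀ (k : Fin m), ∀ a ∈ Fs k, a ∈ E := by
    intro m Fs hEq k a ha
    rw [hEq]
    exact Finset.mem_biUnion.2 ⟨k, Finset.mem_univ _, ha⟩
  right
  by_cases hc : E.card ≤ ((E.min' hne : ℕ+) : ℕ)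
  · obtain ⟨Fs, ⟨g1, g2, g3⟩, _⟩ := singles hsing E.card E rfl
    refine ⟨E.card, Finset.card_pos.2 hne, Fs, ?_, g2, ?_, g3⟩
    · intro k; exact g1 k
    · intro a ha
      have haE : a ∈ E := hmemE Fs g3 _ a ha
      have h2 : E.min' hne ≤ a := E.min'_le a haE
      have h3 : ((E.min' hne : ℕ+) : ℕ) ≤ (a : ℕ) := by exact_mod_cast h2
      omega
  · have h1 : 1 ≤ lev (E.min' hne) := hlev1 _ (E.min'_mem hne)
    have h2 : lev (E.min' hne) ≤ ((E.min' hne : ℕ+) : ℕ) := hlev2 _ (E.min'_mem hne)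
    obtain ⟨Fs, g1, g2, g3⟩ := pieces_exist hsing (lev (E.min' hne)) E lev hne hlev1 hmono
      hcls h1 (by omega) le_rfl
    refine ⟨lev (E.min' hne), h1, Fs, ?_, g2, ?_, g3⟩
    · intro k; exact g1 k
    · intro a ha
      have haE : a ∈ E := hmemE Fs g3 _ a ha
      have h3 : E.min' hne ≤ a := E.min'_le a haE
      have h4 : ((E.min' hne : ℕ+) : ℕ) ≤ (a : ℕ) := by exact_mod_cast h3
      omega



lemma cliques_mono {ϑ : ℕ → ℚ} {S S' : Finset ℕ} (h : S' ⊆ S) (hS : S ∈ sierCliquesQ ϑ) :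
    S' ∈ sierCliquesQ ϑ :=
  hS.mono (by exact_mod_cast h)

lemma sum_indicator {Ω : Type*} [DecidableEq Ω] (Bl : Ω → Finset ℕ)
    (hdisj : ∀ s t : Ω, s ≠ t → Disjoint (Bl s) (Bl t)) (E : Finset Ω) (S : Finset ℕ) :
    ∑ i ∈ S, |∑ t ∈ E, if i ∈ Bl t then (1 : ℝ) else 0|
      = ((S ∩ E.biUnion Bl).card : ℝ) := by
  have h1 : ∀ i, (∑ t ∈ E, if i ∈ Bl t then (1:ℝ) else 0)
      = if i ∈ E.biUnion Bl then 1 else 0 := by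
    intro i
    rw [Finset.sum_boole]
    by_cases h : i ∈ E.biUnion Bl
    · rw [if_pos h]
      rcases Finset.mem_biUnion.1 h with ⟨t, htE, hti⟩
      have h2 : E.filter (fun t => i ∈ Bl t) = {t} := by
        apply Finset.eq_singleton_iff_unique_mem.2
        refine ⟨Finset.mem_filter.2 ⟨htE, hti⟩, ?_⟩
        intro s hs
        rcases Finset.mem_filter.1 hs with ⟨hsE, hsi⟩
        by_contra hst
        exact Finset.disjoint_left.1 (hdisj s t hst) hsi hti
      rw [h2]; simp
    · rw [if_neg h]
      have h2 : E.filter (fun t => i ∈ Bl t) = ∅ := by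
        apply Finset.filter_eq_empty_iff.2
        intro t htE hti
        exact h (Finset.mem_biUnion.2 ⟨t, htE, hti⟩)
      rw [h2]; simp
  calc ∑ i ∈ S, |∑ t ∈ E, if i ∈ Bl t then (1:ℝ) else 0|
      = ∑ i ∈ S, (if i ∈ E.biUnion Bl then (1:ℝ) else 0) := by
        apply Finset.sum_congr rfl
        intro i _
        rw [h1 i]
        by_cases h : i ∈ E.biUnion Bl <;> simp [h]
    _ = ((S.filter (fun i => i ∈ E.biUnion Bl)).card : ℝ) := Finset.sum_boole _ _
    _ = ((S ∩ E.biUnion Bl).card : ℝ) := by rw [Finset.filter_mem_eq_inter]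

lemma combNorm_card {Ω : Type*} [DecidableEq Ω] (ϑ : ℕ → ℚ) (Bl : Ω → Finset ℕ)
    (hdisj : ∀ s t : Ω, s ≠ t → Disjoint (Bl s) (Bl t)) (E : Finset Ω) :
    combNorm (sierCliquesQ ϑ) (fun i => ∑ t ∈ E, if i ∈ Bl t then (1 : ℝ) else 0)
      = ⨆ S ∈ sierCliquesQ ϑ, (((S ∩ E.biUnion Bl).card : ℕ) : ℝ≥0∞) := by
  unfold combNorm
  apply iSup_congr
  intro S
  apply iSup_congr
  intro hS
  rw [sum_indicator Bl hdisj E S, ENNReal.ofReal_natCast]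

lemma norm_le_of_card_le {Ω : Type*} [DecidableEq Ω] (ϑ : ℕ → ℚ) (Bl : Ω → Finset ℕ)
    (hdisj : ∀ s t : Ω, s ≠ t → Disjoint (Bl s) (Bl t)) (E : Finset Ω) (N : ℕ)
    (h : ∀ S ∈ sierCliquesQ ϑ, (S ∩ E.biUnion Bl).card ≤ N) :
    combNorm (sierCliquesQ ϑ) (fun i => ∑ t ∈ E, if i ∈ Bl t then (1 : ℝ) else 0)
      ≤ (N : ℝ≥0∞) := by
  rw [combNorm_card ϑ Bl hdisj E]
  exact iSup₂_le fun S hS => Nat.cast_le.2 (h S hS)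

lemma card_le_norm {Ω : Type*} [DecidableEq Ω] (ϑ : ℕ → ℚ) (Bl : Ω → Finset ℕ)
    (hdisj : ∀ s t : Ω, s ≠ t → Disjoint (Bl s) (Bl t)) (E : Finset Ω) (S : Finset ℕ)
    (hS : S ∈ sierCliquesQ ϑ) :
    (((S ∩ E.biUnion Bl).card : ℕ) : ℝ≥0∞)
      ≤ combNorm (sierCliquesQ ϑ) (fun i => ∑ t ∈ E, if i ∈ Bl t then (1 : ℝ) else 0) := by
  rw [combNorm_card ϑ Bl hdisj E]
  exact le_iSup₂ (f := fun S (_ : S ∈ sierCliquesQ ϑ) => (((S ∩ E.biUnion Bl).card : ℕ) : ℝ≥0∞)) S hS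

lemma exists_clique_of_norm_eq {Ω : Type*} [DecidableEq Ω] (ϑ : ℕ → ℚ) (Bl : Ω → Finset ℕ)
    (hdisj : ∀ s t : Ω, s ≠ t → Disjoint (Bl s) (Bl t)) (E : Finset Ω) (N : ℕ) (hN : 0 < N)
    (h : combNorm (sierCliquesQ ϑ) (fun i => ∑ t ∈ E, if i ∈ Bl t then (1 : ℝ) else 0)
      = (N : ℝ≥0∞)) :
    ∃ S ∈ sierCliquesQ ϑ, N ≤ (S ∩ E.biUnion Bl).card := by
  by_contra hcon
  push_neg at hcon
  have h2 : combNorm (sierCliquesQ ϑ) (fun i => ∑ t ∈ E, if i ∈ Bl t then (1 : ℝ) else 0)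
      ≤ ((N - 1 : ℕ) : ℝ≥0∞) :=
    norm_le_of_card_le ϑ Bl hdisj E (N-1) (fun S hS => by have := hcon S hS; omega)
  rw [h] at h2
  have h3 : N ≤ N - 1 := Nat.cast_le.1 h2
  omega

section Construction

variable (I : ℕ+ → ℕ+ → Finset ℕ) (θ : ℕ+ → ℕ → ℚ)

/-- positive-natural from a natural index -/
def pnn (k : ℕ) : ℕ+ := k.succPNat

/-- size of segment `k` inside block `b` -/
def csz (b k : ℕ) : ℕ := (I (pnn k) (pnn b)).card

/-- length of block `b` -/
def Lb (b : ℕ) : ℕ := psum (csz I b) (b+1)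

/-- start position of block `b` -/
def startB (b : ℕ) : ℕ := psum (Lb I) b

def blkOf (p : ℕ) : ℕ := layer (Lb I) p
def offB (p : ℕ) : ℕ := p - startB I (blkOf I p)
def segOf (p : ℕ) : ℕ := layer (csz I (blkOf I p)) (offB I p)
def offS (p : ℕ) : ℕ := offB I p - psum (csz I (blkOf I p)) (segOf I p)
def eltOf (p : ℕ) : ℕ :=
  ((I (pnn (segOf I p)) (pnn (blkOf I p))).sort (· ≤ ·)).getD (offS I p) 0

noncomputable def theta' (p : ℕ) : ℚ := fQ (segOf I p + 1) (θ (pnn (segOf I p)) (eltOf I p))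

def rnk (b k i : ℕ) : ℕ := ((I (pnn k) (pnn b)).sort (· ≤ ·)).idxOf i
def enc (b k i : ℕ) : ℕ := startB I b + (psum (csz I b) k + rnk I b k i)

def Jb (n : ℕ+) : Finset ℕ := Finset.Ico (startB I n.natPred) (startB I (n.natPred + 1))

variable {I} {θ}

section Decode

variable (hI : ∀ k n, (I k n).Nonempty)
include hI

lemma csz_pos : ∀ b k, 0 < csz I b k := fun b k => Finset.card_pos.2 (hI _ _)

lemma Lb_pos : ∀ b, 0 < Lb I b := by
  intro b
  have h : psum (csz I b) 1 ≤ psum (csz I b) (b+1) := psum_mono _ (by omega)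
  have h2 : psum (csz I b) 1 = csz I b 0 := by simp [psum]
  have h3 := csz_pos hI b 0
  unfold Lb
  omega

lemma startB_succ (b : ℕ) : startB I (b+1) = startB I b + Lb I b := rfl

lemma blk_spec₁ (p : ℕ) : startB I (blkOf I p) ≤ p := layer_spec₁ _ _

lemma blk_spec₂ (p : ℕ) : p < startB I (blkOf I p) + Lb I (blkOf I p) := by
  have := layer_spec₂ (Lb I) (Lb_pos hI) p
  rw [← startB_succ hI]
  exact this

lemma offB_lt (p : ℕ) : offB I p < Lb I (blkOf I p) := by
  have h1 := blk_spec₁ hI p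
  have h2 := blk_spec₂ hI p
  unfold offB
  omega

lemma seg_spec₁ (p : ℕ) : psum (csz I (blkOf I p)) (segOf I p) ≤ offB I p := layer_spec₁ _ _

lemma seg_spec₂ (p : ℕ) : offB I p < psum (csz I (blkOf I p)) (segOf I p + 1) :=
  layer_spec₂ _ (csz_pos hI _) _

lemma seg_le_blk (p : ℕ) : segOf I p ≤ blkOf I p :=
  layer_le _ (csz_pos hI _) (offB_lt hI p)

lemma offS_lt (p : ℕ) : offS I p < csz I (blkOf I p) (segOf I p) := by
  have h1 := seg_spec₁ hI p
  have h2 := seg_spec₂ hI p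
  unfold offS
  have h3 : psum (csz I (blkOf I p)) (segOf I p + 1)
      = psum (csz I (blkOf I p)) (segOf I p) + csz I (blkOf I p) (segOf I p) := rfl
  omega

lemma elt_mem (p : ℕ) : eltOf I p ∈ I (pnn (segOf I p)) (pnn (blkOf I p)) := by
  unfold eltOf
  have hlen : offS I p < ((I (pnn (segOf I p)) (pnn (blkOf I p))).sort (· ≤ ·)).length := by
    rw [Finset.length_sort]
    exact offS_lt hI p
  rw [List.getD_eq_getElem _ _ hlen]
  exact (Finset.mem_sort _).1 (List.getElem_mem hlen)

lemma p_eq_enc (p : ℕ) : p = enc I (blkOf I p) (segOf I p) (eltOf I p) := by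
  have h1 := blk_spec₁ hI p
  have h2 := seg_spec₁ hI p
  have hlen : offS I p < ((I (pnn (segOf I p)) (pnn (blkOf I p))).sort (· ≤ ·)).length := by
    rw [Finset.length_sort]; exact offS_lt hI p
  have h3 : rnk I (blkOf I p) (segOf I p) (eltOf I p) = offS I p := by
    unfold rnk eltOf
    rw [List.getD_eq_getElem _ _ hlen]
    exact (Finset.sort_nodup _ _).idxOf_getElem _ hlen
  unfold enc
  rw [h3]
  have h4 : offS I p = offB I p - psum (csz I (blkOf I p)) (segOf I p) := rfl
  have h5 : offB I p = p - startB I (blkOf I p) := rfl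
  omega

lemma rnk_lt {b k i : ℕ} (hi : i ∈ I (pnn k) (pnn b)) : rnk I b k i < csz I b k := by
  unfold rnk csz
  rw [← Finset.length_sort (· ≤ ·)]
  exact List.idxOf_lt_length_iff.2 ((Finset.mem_sort _).2 hi)

lemma dec_enc {b k i : ℕ} (hk : k ≤ b) (hi : i ∈ I (pnn k) (pnn b)) :
    blkOf I (enc I b k i) = b ∧ segOf I (enc I b k i) = k ∧ eltOf I (enc I b k i) = i := by
  have hr := rnk_lt hI hi
  have hin : psum (csz I b) k + rnk I b k i < Lb I b := by
    have h1 : psum (csz I b) k + csz I b k = psum (csz I b) (k+1) := rfl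
    have h2 : psum (csz I b) (k+1) ≤ psum (csz I b) (b+1) := psum_mono _ (by omega)
    unfold Lb
    omega
  have hblk : blkOf I (enc I b k i) = b := by
    apply layer_eq _ (Lb_pos hI)
    · exact Nat.le_add_right _ _
    · have hsb : psum (Lb I) (b+1) = startB I b + Lb I b := rfl
      unfold enc
      omega
  have hoffB : offB I (enc I b k i) = psum (csz I b) k + rnk I b k i := by
    unfold offB
    rw [hblk]
    unfold enc
    omega
  have hseg : segOf I (enc I b k i) = k := by
    unfold segOf
    rw [hblk, hoffB]
    apply layer_eq _ (csz_pos hI b)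
    · omega
    · have h1 : psum (csz I b) k + csz I b k = psum (csz I b) (k+1) := rfl
      omega
  have hoffS : offS I (enc I b k i) = rnk I b k i := by
    unfold offS
    rw [hblk, hoffB, hseg]
    omega
  refine ⟨hblk, hseg, ?_⟩
  unfold eltOf
  rw [hblk, hseg, hoffS]
  have hlen : rnk I b k i < ((I (pnn k) (pnn b)).sort (· ≤ ·)).length := by
    rw [Finset.length_sort]; exact hr
  rw [List.getD_eq_getElem _ _ hlen]
  exact List.getElem_idxOf hlen

lemma mem_Jb {p : ℕ} {n : ℕ+} : p ∈ Jb I n ↔ blkOf I p = n.natPred := by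
  unfold Jb
  rw [Finset.mem_Ico]
  constructor
  · rintro ⟨h1, h2⟩
    exact layer_eq _ (Lb_pos hI) h1 h2
  · intro h
    have h1 := blk_spec₁ hI p
    have h2 := blk_spec₂ hI p
    rw [h] at h1 h2
    rw [startB_succ hI]
    exact ⟨h1, h2⟩

lemma enc_mem_Jb {b k i : ℕ} (hk : k ≤ b) (hi : i ∈ I (pnn k) (pnn b)) :
    enc I b k i ∈ Jb I (pnn b) := by
  rw [mem_Jb hI]
  have := (dec_enc hI hk hi).1
  simp only [pnn, Nat.natPred_succPNat]
  exact this

end Decode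

end Construction

lemma card_inter_biUnion_le {Ω : Type*} [DecidableEq Ω] (Bl : Ω → Finset ℕ) (E : Finset Ω)
    (S : Finset ℕ) (h : ∀ t ∈ E, (S ∩ Bl t).card ≤ 1) :
    (S ∩ E.biUnion Bl).card ≤ E.card := by
  have hsub : S ∩ E.biUnion Bl ⊆ E.biUnion (fun t => S ∩ Bl t) := by
    intro x hx
    rcases Finset.mem_inter.1 hx with ⟨hx1, hx2⟩
    rcases Finset.mem_biUnion.1 hx2 with ⟨t, ht, hxt⟩
    exact Finset.mem_biUnion.2 ⟨t, ht, Finset.mem_inter.2 ⟨hx1, hxt⟩⟩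
  calc (S ∩ E.biUnion Bl).card ≤ (E.biUnion (fun t => S ∩ Bl t)).card :=
        Finset.card_le_card hsub
    _ ≤ ∑ t ∈ E, (S ∩ Bl t).card := Finset.card_biUnion_le
    _ ≤ ∑ _t ∈ E, 1 := Finset.sum_le_sum h
    _ = E.card := by simp

section Main

variable {Fam : ℕ+ → Set (Finset ℕ+)} {I : ℕ+ → ℕ+ → Finset ℕ} {θ : ℕ+ → ℕ → ℚ}
variable (hFam : ∀ k, FHC (Fam k)) (hem : ∀ k, Emulates (I k) (θ k) (Fam k))
variable (hinc : ∀ k, ∀ n m : ℕ+, n < m → ∀ a ∈ I k n, ∀ b ∈ I k m, a < b)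

include hFam hem in
lemma hone (k n : ℕ+) (S : Finset ℕ) (hS : S ∈ sierCliquesQ (θ k)) :
    (S ∩ I k n).card ≤ 1 := by
  obtain ⟨h1, h2, h3, h4, h5⟩ := hem k
  have hnorm := (h5 {n}).2 ((hFam k).2 n)
  have hle := card_le_norm (θ k) (I k) h3 {n} S hS
  rw [hnorm] at hle
  rw [Finset.singleton_biUnion] at hle
  simp only [Finset.card_singleton, Nat.cast_one] at hle
  exact_mod_cast hle

include hFam hem in
lemma hdec (k n : ℕ+) {i i' : ℕ} (hi : i ∈ I k n) (hi' : i' ∈ I k n) (hlt : i < i') :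
    θ k i' < θ k i := by
  obtain ⟨h1, h2, h3, h4, h5⟩ := hem k
  rcases lt_trichotomy (θ k i') (θ k i) with h | h | h
  · exact h
  · exact absurd (h4 h) (by omega)
  · exfalso
    have hclique : ({i, i'} : Finset ℕ) ∈ sierCliquesQ (θ k) := by
      intro a ha b hb hab
      simp only [Finset.coe_insert, Finset.coe_singleton, Set.mem_insert_iff,
        Set.mem_singleton_iff] at ha hb
      rcases ha with rfl | rfl <;> rcases hb with rfl | rfl <;> first
        | exact absurd hab (lt_irrefl _)
        | exact h
        | exact absurd (hab.trans hlt) (lt_irrefl _)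
    have hcard := hone hFam hem k n {i, i'} hclique
    have hsub : ({i, i'} : Finset ℕ) ⊆ I k n := by
      intro a ha
      rcases Finset.mem_insert.1 ha with rfl | ha
      · exact hi
      · rw [Finset.mem_singleton.1 ha]; exact hi'
    rw [Finset.inter_eq_left.2 hsub] at hcard
    rw [Finset.card_insert_of_notMem (by simp; omega), Finset.card_singleton] at hcard
    omega

/-- the witness property equivalent to membership in an emulated family -/
def Wit (I : ℕ+ → ℕ+ → Finset ℕ) (θ : ℕ+ → ℕ → ℚ) (k : ℕ+) (F : Finset ℕ+) : Prop :=
  ∃ c : ℕ+ → ℕ, (∀ n ∈ F, c n ∈ I k n) ∧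
    ∀ m ∈ F, ∀ n ∈ F, m < n → θ k (c m) < θ k (c n)

include hFam hem hinc in
lemma fam_of_wit (k : ℕ+) (F : Finset ℕ+) (hW : Wit I θ k F) : F ∈ Fam k := by
  obtain ⟨h1, h2, h3, h4, h5⟩ := hem k
  obtain ⟨c, hc1, hc2⟩ := hW
  apply (h5 F).1
  set S := F.image (fun n => c n) with hSdef
  have hinj : Set.InjOn (fun n => c n) F := by
    intro m hm n hn hmn
    by_contra hne2
    rcases lt_or_gt_of_ne hne2 with h | h
    · have := hinc k m n h (c m) (hc1 m hm) (c n) (hc1 n hn)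
      simp only at hmn
      omega
    · have := hinc k n m h (c n) (hc1 n hn) (c m) (hc1 m hm)
      simp only at hmn
      omega
  have hcardS : S.card = F.card := Finset.card_image_of_injOn hinj
  have hSclique : S ∈ sierCliquesQ (θ k) := by
    intro a ha b hb hab
    simp only [hSdef, Finset.coe_image, Set.mem_image, Finset.mem_coe] at ha hb
    obtain ⟨m, hm, rfl⟩ := ha
    obtain ⟨n, hn, rfl⟩ := hb
    have hmn : m < n := by
      rcases lt_trichotomy m n with h | h | h
      · exact h
      · subst h; exact absurd hab (lt_irrefl _)
      · have := hinc k n m h (c n) (hc1 n hn) (c m) (hc1 m hm)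
        exact absurd (hab.trans this) (lt_irrefl _)
    exact hc2 m hm n hn hmn
  have hSsub : S ⊆ F.biUnion (I k) := by
    intro x hx
    rcases Finset.mem_image.1 hx with ⟨n, hn, rfl⟩
    exact Finset.mem_biUnion.2 ⟨n, hn, hc1 n hn⟩
  apply le_antisymm
  · apply norm_le_of_card_le (θ k) (I k) h3 F F.card
    intro S' hS'
    exact card_inter_biUnion_le (I k) F S' (fun t _ => hone hFam hem k t S' hS')
  · have := card_le_norm (θ k) (I k) h3 F S hSclique
    rw [Finset.inter_eq_left.2 hSsub] at this
    rw [hcardS] at this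
    exact this

include hFam hem hinc in
lemma wit_of_fam (k : ℕ+) (F : Finset ℕ+) (hF : F ∈ Fam k) : Wit I θ k F := by
  obtain ⟨h1, h2, h3, h4, h5⟩ := hem k
  rcases Finset.eq_empty_or_nonempty F with rfl | hFne
  · exact ⟨fun _ => 0, by simp, by simp⟩
  · have hnorm := (h5 F).2 hF
    have hNpos : 0 < F.card := Finset.card_pos.2 hFne
    obtain ⟨S, hS, hcard⟩ := exists_clique_of_norm_eq (θ k) (I k) h3 F F.card hNpos hnorm
    have hper : ∀ n ∈ F, (S ∩ I k n).Nonempty := by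
      intro n hn
      by_contra hc
      rw [Finset.not_nonempty_iff_eq_empty] at hc
      have hb1 : (S ∩ F.biUnion (I k)).card ≤ ∑ t ∈ F, (S ∩ I k t).card := by
        have hsub : S ∩ F.biUnion (I k) ⊆ F.biUnion (fun t => S ∩ I k t) := by
          intro x hx
          rcases Finset.mem_inter.1 hx with ⟨hx1, hx2⟩
          rcases Finset.mem_biUnion.1 hx2 with ⟨t, ht, hxt⟩
          exact Finset.mem_biUnion.2 ⟨t, ht, Finset.mem_inter.2 ⟨hx1, hxt⟩⟩
        exact le_trans (Finset.card_le_card hsub) Finset.card_biUnion_le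
      have hb2 : ∑ t ∈ F, (S ∩ I k t).card
          = (S ∩ I k n).card + ∑ t ∈ F.erase n, (S ∩ I k t).card :=
        (Finset.add_sum_erase F _ hn).symm
      have hb3 : ∑ t ∈ F.erase n, (S ∩ I k t).card ≤ ∑ _t ∈ F.erase n, 1 :=
        Finset.sum_le_sum (fun t _ => hone hFam hem k t S hS)
      have hb4 : ∑ _t ∈ F.erase n, 1 = F.card - 1 := by
        rw [Finset.sum_const, smul_eq_mul, mul_one, Finset.card_erase_of_mem hn]
      rw [hc] at hb2
      simp only [Finset.card_empty] at hb2
      omega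
    set c : ℕ+ → ℕ := fun n => sInf ((S ∩ I k n : Finset ℕ) : Set ℕ) with hcdef
    have hcmem : ∀ n ∈ F, c n ∈ S ∩ I k n := by
      intro n hn
      have := Nat.sInf_mem (s := ((S ∩ I k n : Finset ℕ) : Set ℕ))
        (by exact_mod_cast Finset.coe_nonempty.2 (hper n hn))
      exact_mod_cast this
    refine ⟨c, fun n hn => (Finset.mem_inter.1 (hcmem n hn)).2, ?_⟩
    intro m hm n hn hmn
    have hcm := hcmem m hm
    have hcn := hcmem n hn
    have hlt : c m < c n := hinc k m n hmn (c m) (Finset.mem_inter.1 hcm).2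
      (c n) (Finset.mem_inter.1 hcn).2
    exact hS (Finset.mem_coe.2 (Finset.mem_inter.1 hcm).1)
      (Finset.mem_coe.2 (Finset.mem_inter.1 hcn).1) hlt

end Main

section Main2

variable {Fam : ℕ+ → Set (Finset ℕ+)} {I : ℕ+ → ℕ+ → Finset ℕ} {θ : ℕ+ → ℕ → ℚ}
variable (hFam : ∀ k, FHC (Fam k)) (hem : ∀ k, Emulates (I k) (θ k) (Fam k))
variable (hinc : ∀ k, ∀ n m : ℕ+, n < m → ∀ a ∈ I k n, ∀ b ∈ I k m, a < b)

lemma pnn_natPred (n : ℕ+) : pnn n.natPred = n := PNat.succPNat_natPred n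

lemma pnn_def (v : ℕ) (hv : 0 < v) : pnn (v - 1) = ⟨v, hv⟩ := by
  apply Subtype.ext
  simp only [pnn, Nat.succPNat, PNat.mk_ofNat]
  omega

include hem in
lemma hI' : ∀ k n, (I k n).Nonempty := fun k n => (hem k).1 n

include hem in
lemma lt_of_blk_lt {p q : ℕ} (h : blkOf I p < blkOf I q) : p < q := by
  have hI := hI' hem
  have h1 := blk_spec₂ hI p
  have h2 := blk_spec₁ hI q
  have h3 : startB I (blkOf I p + 1) ≤ startB I (blkOf I q) := psum_mono _ (by omega)
  rw [startB_succ hI] at h3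
  omega

include hFam hem in
lemma theta'_within {p q : ℕ} (h : p < q) (hb : blkOf I p = blkOf I q) :
    theta' I θ q < theta' I θ p := by
  have hI := hI' hem
  have hoff : offB I p < offB I q := by
    have h1 := blk_spec₁ hI p
    have h2 := blk_spec₁ hI q
    unfold offB
    rw [← hb]
    omega
  have hseg : segOf I p ≤ segOf I q := by
    unfold segOf
    rw [← hb]
    exact layer_mono _ (csz_pos hI _) (le_of_lt hoff)
  rcases eq_or_lt_of_le hseg with hseq | hslt
  · -- same segment: elements increase, θ decreases
    have hoffS : offS I p < offS I q := by
      have h1 := seg_spec₁ hI p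
      have h2 := seg_spec₁ hI q
      have h3 := seg_spec₂ hI q
      unfold offS
      rw [← hb, ← hseq] at *
      omega
    have hlenp' : offS I p < ((I (pnn (segOf I p)) (pnn (blkOf I p))).sort (· ≤ ·)).length := by
      rw [Finset.length_sort]; exact offS_lt hI p
    have hlenq' : offS I q < ((I (pnn (segOf I p)) (pnn (blkOf I p))).sort (· ≤ ·)).length := by
      rw [hseq, hb, Finset.length_sort]; exact offS_lt hI q
    have helt : eltOf I p < eltOf I q := by
      unfold eltOf
      rw [← hseq, ← hb]
      rw [List.getD_eq_getElem _ _ hlenp', List.getD_eq_getElem _ _ hlenq']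
      exact (Finset.sortedLT_sort (I (pnn (segOf I p)) (pnn (blkOf I p)))).strictMono_get
        (show (⟨offS I p, hlenp'⟩ : Fin _) < ⟨offS I q, hlenq'⟩ from hoffS)
    have hmem1 := elt_mem hI p
    have hmem2 := elt_mem hI q
    rw [← hseq, ← hb] at hmem2
    have hθ := hdec hFam hem (pnn (segOf I p)) (pnn (blkOf I p)) hmem1 hmem2 helt
    unfold theta'
    rw [← hseq]
    exact (fQ_strictMono _) hθ
  · -- segment increased: level increased, value decreased
    unfold theta'
    exact fQ_lt_fQ (by omega) _ _

include hFam hem in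
lemma card_inter_Jb_le_one (S : Finset ℕ) (hS : S ∈ sierCliquesQ (theta' I θ)) (n : ℕ+) :
    (S ∩ Jb I n).card ≤ 1 := by
  have hI := hI' hem
  apply Finset.card_le_one.2
  intro a ha b hb
  rcases Finset.mem_inter.1 ha with ⟨haS, haJ⟩
  rcases Finset.mem_inter.1 hb with ⟨hbS, hbJ⟩
  rw [mem_Jb hI] at haJ hbJ
  by_contra hne
  rcases lt_or_gt_of_ne hne with h | h
  · have h1 := hS (Finset.mem_coe.2 haS) (Finset.mem_coe.2 hbS) h
    have h2 := theta'_within hFam hem h (haJ.trans hbJ.symm)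
    exact absurd (h1.trans h2) (lt_irrefl _)
  · have h1 := hS (Finset.mem_coe.2 hbS) (Finset.mem_coe.2 haS) h
    have h2 := theta'_within hFam hem h (hbJ.trans haJ.symm)
    exact absurd (h1.trans h2) (lt_irrefl _)

include hem in
lemma theta'_inj : Function.Injective (theta' I θ) := by
  have hI := hI' hem
  intro p q h
  unfold theta' at h
  obtain ⟨hseg, hg⟩ := fQ_eq_iff h
  have hseg' : segOf I p = segOf I q := by omega
  rw [← hseg'] at hg
  have hθeq : θ (pnn (segOf I p)) (eltOf I p) = θ (pnn (segOf I p)) (eltOf I q) :=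
    gQ_strictMono.injective hg
  have helt : eltOf I p = eltOf I q := (hem (pnn (segOf I p))).2.2.2.1 hθeq
  have hm1 := elt_mem hI p
  have hm2 := elt_mem hI q
  rw [← hseg', ← helt] at hm2
  have hblk : blkOf I p = blkOf I q := by
    by_contra hne
    have hpne : pnn (blkOf I p) ≠ pnn (blkOf I q) := by
      intro hc
      exact hne (Nat.succPNat_inj.1 hc)
    exact Finset.disjoint_left.1 ((hem (pnn (segOf I p))).2.2.1 _ _ hpne) hm1 hm2
  calc p = enc I (blkOf I p) (segOf I p) (eltOf I p) := p_eq_enc hI p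
    _ = enc I (blkOf I q) (segOf I q) (eltOf I q) := by rw [hseg', hblk, helt]
    _ = q := (p_eq_enc hI q).symm

end Main2

section Main3

variable {Fam : ℕ+ → Set (Finset ℕ+)} {I : ℕ+ → ℕ+ → Finset ℕ} {θ : ℕ+ → ℕ → ℚ}
variable (hFam : ∀ k, FHC (Fam k)) (hem : ∀ k, Emulates (I k) (θ k) (Fam k))
variable (hinc : ∀ k, ∀ n m : ℕ+, n < m → ∀ a ∈ I k n, ∀ b ∈ I k m, a < b)

include hem in
lemma Jb_disjoint : ∀ s t : ℕ+, s ≠ t → Disjoint (Jb I s) (Jb I t) := by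
  have hI := hI' hem
  intro s t hst
  rw [Finset.disjoint_left]
  intro p hp hq
  rw [mem_Jb hI] at hp hq
  exact hst (PNat.natPred_injective (hp.symm.trans hq))

include hem in
lemma Jb_nonempty (n : ℕ+) : (Jb I n).Nonempty := by
  have hI := hI' hem
  refine ⟨startB I n.natPred, Finset.mem_Ico.2 ⟨le_rfl, ?_⟩⟩
  rw [startB_succ hI]
  have := Lb_pos hI n.natPred
  omega

lemma Jb_interval (n : ℕ+) : IsIntervalN (Jb I n) := by
  intro a ha b hb c h1 h2
  simp only [Jb, Finset.mem_Ico] at *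
  omega

include hem in
lemma Jb_lt {n m : ℕ+} (h : n < m) : ∀ a ∈ Jb I n, ∀ b ∈ Jb I m, a < b := by
  have hI := hI' hem
  intro a ha b hb
  apply lt_of_blk_lt hem
  rw [(mem_Jb hI).1 ha, (mem_Jb hI).1 hb]
  have h1 : (n:ℕ) < (m:ℕ) := by exact_mod_cast h
  have h2 := PNat.natPred_add_one n
  have h3 := PNat.natPred_add_one m
  omega

include hFam hem hinc in
lemma norm_eq_of_DStar (E : Finset ℕ+) (hE : E ∈ DStarOp Fam) :
    combNorm (sierCliquesQ (theta' I θ)) (fun i => ∑ t ∈ E, if i ∈ Jb I t then (1 : ℝ) else 0)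
      = (E.card : ℝ≥0∞) := by
  have hI := hI' hem
  have hJdisj := Jb_disjoint (I := I) hem
  rcases hE with rfl | ⟨m, hm, Fs, hFs1, hFs2, hFs3, hFs4⟩
  · rw [combNorm_card _ _ hJdisj]
    simp only [Finset.card_empty, Nat.cast_zero]
    apply le_antisymm
    · exact iSup₂_le fun S hS => by simp
    · exact zero_le
  · have hWit : ∀ k : Fin m, Wit I θ (pnn k.val) (Fs k) := fun k =>
      wit_of_fam hFam hem hinc _ _ (hFs1 k).1
    choose cc hcc1 hcc2 using hWit
    have hkb : ∀ (k : Fin m), ∀ n, n ∈ Fs k → (k : ℕ) + 1 ≤ (n : ℕ) := by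
      intro k n hn
      by_cases hk : (k : ℕ) = m - 1
      · have hkeq : k = ⟨m-1, Nat.sub_lt hm Nat.one_pos⟩ := Fin.ext hk
        have h1 := hFs3 n (hkeq ▸ hn)
        have h2 : (k:ℕ) < m := k.isLt
        omega
      · have hklt : (k:ℕ) < m - 1 := by have := k.isLt; omega
        obtain ⟨a, ha⟩ := (hFs1 ⟨m-1, Nat.sub_lt hm Nat.one_pos⟩).2
        have h1 := hFs2 k ⟨m-1, Nat.sub_lt hm Nat.one_pos⟩
          (by rw [Fin.lt_def]; exact hklt) a ha n hn
        have h2 := hFs3 a ha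
        have h3 : (a:ℕ) < (n:ℕ) := by exact_mod_cast h1
        have h4 : (k:ℕ) < m := k.isLt
        omega
    have hmemE : ∀ n, n ∈ E → ∃ k : Fin m, n ∈ Fs k := by
      intro n hn
      rw [hFs4] at hn
      rcases Finset.mem_biUnion.1 hn with ⟨k, _, hk⟩
      exact ⟨k, hk⟩
    classical
    set kOf : ℕ+ → Fin m := fun n => if h : ∃ k : Fin m, n ∈ Fs k then h.choose else ⟨0, hm⟩
      with hkOfdef
    have hkOf : ∀ n ∈ E, n ∈ Fs (kOf n) := by
      intro n hn
      have h := hmemE n hn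
      simp only [hkOfdef, dif_pos h]
      exact h.choose_spec
    set pt : ℕ+ → ℕ := fun n => enc I n.natPred (kOf n).val (cc (kOf n) n) with hptdef
    have hptdec : ∀ n ∈ E, blkOf I (pt n) = n.natPred ∧ segOf I (pt n) = (kOf n).val
        ∧ eltOf I (pt n) = cc (kOf n) n := by
      intro n hn
      apply dec_enc hI
      · have h1 := hkb (kOf n) n (hkOf n hn)
        have h2 := PNat.natPred_add_one n
        omega
      · have h1 := hcc1 (kOf n) n (hkOf n hn)
        rw [pnn_natPred]
        exact h1
    have hptJ : ∀ n ∈ E, pt n ∈ Jb I n := by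
      intro n hn
      rw [mem_Jb hI]
      exact (hptdec n hn).1
    have hθpt : ∀ n ∈ E, theta' I θ (pt n)
        = fQ ((kOf n).val + 1) (θ (pnn (kOf n).val) (cc (kOf n) n)) := by
      intro n hn
      obtain ⟨h1, h2, h3⟩ := hptdec n hn
      unfold theta'
      rw [h2, h3]
    have hptmono : ∀ a ∈ E, ∀ b ∈ E, a < b → pt a < pt b := by
      intro a ha b hb hab
      apply lt_of_blk_lt hem
      rw [(hptdec a ha).1, (hptdec b hb).1]
      have h1 : (a:ℕ) < (b:ℕ) := by exact_mod_cast hab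
      have h2 := PNat.natPred_add_one a
      have h3 := PNat.natPred_add_one b
      omega
    have hptinj : Set.InjOn pt E := by
      intro a ha b hb hab
      by_contra hne2
      rcases lt_or_gt_of_ne hne2 with h | h
      · exact absurd (hab ▸ hptmono a ha b hb h) (lt_irrefl _)
      · exact absurd (hab ▸ hptmono b hb a ha h) (lt_irrefl _)
    set S := E.image pt with hSdef
    have hclique : S ∈ sierCliquesQ (theta' I θ) := by
      intro x hx y hy hxy
      simp only [hSdef, Finset.coe_image, Set.mem_image, Finset.mem_coe] at hx hy
      obtain ⟨a, ha, rfl⟩ := hx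
      obtain ⟨b, hb, rfl⟩ := hy
      have hab : a < b := by
        rcases lt_trichotomy a b with h | h | h
        · exact h
        · subst h; exact absurd hxy (lt_irrefl _)
        · exact absurd (hxy.trans (hptmono b hb a ha h)) (lt_irrefl _)
      rw [hθpt a ha, hθpt b hb]
      rcases lt_trichotomy (kOf a) (kOf b) with hk | hk | hk
      · have h1 := hFs2 (kOf a) (kOf b) hk b (hkOf b hb) a (hkOf a ha)
        exact absurd (hab.trans h1) (lt_irrefl _)
      · rw [hk]
        apply fQ_strictMono
        exact hcc2 (kOf b) a (hk ▸ hkOf a ha) b (hkOf b hb) hab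
      · apply fQ_lt_fQ
        have : (kOf b : ℕ) < (kOf a : ℕ) := hk
        omega
    have hsubU : S ⊆ E.biUnion (Jb I) := by
      intro x hx
      rcases Finset.mem_image.1 hx with ⟨n, hn, rfl⟩
      exact Finset.mem_biUnion.2 ⟨n, hn, hptJ n hn⟩
    apply le_antisymm
    · apply norm_le_of_card_le _ _ hJdisj
      intro S' hS'
      exact card_inter_biUnion_le _ _ _ (fun t _ => card_inter_Jb_le_one hFam hem S' hS' t)
    · have hcard := card_le_norm (theta' I θ) (Jb I) hJdisj E S hclique
      rw [Finset.inter_eq_left.2 hsubU, Finset.card_image_of_injOn hptinj] at hcard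
      exact hcard

include hFam hem hinc in
lemma DStar_of_norm (E : Finset ℕ+)
    (hnorm : combNorm (sierCliquesQ (theta' I θ))
      (fun i => ∑ t ∈ E, if i ∈ Jb I t then (1 : ℝ) else 0) = (E.card : ℝ≥0∞)) :
    E ∈ DStarOp Fam := by
  rcases Finset.eq_empty_or_nonempty E with rfl | hEne
  · left; rfl
  have hI := hI' hem
  have hJdisj := Jb_disjoint (I := I) hem
  obtain ⟨S, hS, hScard⟩ := exists_clique_of_norm_eq _ _ hJdisj E E.card
    (Finset.card_pos.2 hEne) hnorm
  have hper : ∀ n ∈ E, (S ∩ Jb I n).Nonempty := by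
    intro n hn
    by_contra hc
    rw [Finset.not_nonempty_iff_eq_empty] at hc
    have hb1 : (S ∩ E.biUnion (Jb I)).card ≤ ∑ t ∈ E, (S ∩ Jb I t).card := by
      have hsub : S ∩ E.biUnion (Jb I) ⊆ E.biUnion (fun t => S ∩ Jb I t) := by
        intro x hx
        rcases Finset.mem_inter.1 hx with ⟨hx1, hx2⟩
        rcases Finset.mem_biUnion.1 hx2 with ⟨t, ht, hxt⟩
        exact Finset.mem_biUnion.2 ⟨t, ht, Finset.mem_inter.2 ⟨hx1, hxt⟩⟩
      exact le_trans (Finset.card_le_card hsub) Finset.card_biUnion_le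
    have hb2 : ∑ t ∈ E, (S ∩ Jb I t).card
        = (S ∩ Jb I n).card + ∑ t ∈ E.erase n, (S ∩ Jb I t).card :=
      (Finset.add_sum_erase E _ hn).symm
    have hb3 : ∑ t ∈ E.erase n, (S ∩ Jb I t).card ≤ ∑ _t ∈ E.erase n, 1 :=
      Finset.sum_le_sum (fun t _ => card_inter_Jb_le_one hFam hem S hS t)
    have hb4 : ∑ _t ∈ E.erase n, 1 = E.card - 1 := by
      rw [Finset.sum_const, smul_eq_mul, mul_one, Finset.card_erase_of_mem hn]
    rw [hc] at hb2
    simp only [Finset.card_empty] at hb2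
    have hb5 : 0 < E.card := Finset.card_pos.2 hEne
    omega
  set pp : ℕ+ → ℕ := fun n => sInf ((S ∩ Jb I n : Finset ℕ) : Set ℕ) with hppdef
  have hppmem : ∀ n ∈ E, pp n ∈ S ∩ Jb I n := by
    intro n hn
    have := Nat.sInf_mem (s := ((S ∩ Jb I n : Finset ℕ) : Set ℕ))
      (by exact_mod_cast Finset.coe_nonempty.2 (hper n hn))
    exact_mod_cast this
  set lev : ℕ+ → ℕ := fun n => segOf I (pp n) + 1 with hlevdef
  have hlev : ∀ n, lev n = segOf I (pp n) + 1 := fun n => rfl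
  have hblk : ∀ n ∈ E, blkOf I (pp n) = n.natPred := by
    intro n hn
    exact (mem_Jb hI).1 (Finset.mem_inter.1 (hppmem n hn)).2
  have hppS : ∀ n ∈ E, pp n ∈ S := fun n hn => (Finset.mem_inter.1 (hppmem n hn)).1
  have hppmono : ∀ a ∈ E, ∀ b ∈ E, a < b → pp a < pp b := by
    intro a ha b hb hab
    apply lt_of_blk_lt hem
    rw [hblk a ha, hblk b hb]
    have h1 : (a:ℕ) < (b:ℕ) := by exact_mod_cast hab
    have h2 := PNat.natPred_add_one a
    have h3 := PNat.natPred_add_one b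
    omega
  apply mem_DStar (Fam := Fam) (fun x v => (hFam v).2 x) E lev hEne
  · intro n hn
    rw [hlev]
    omega
  · intro n hn
    have h1 := seg_le_blk hI (pp n)
    rw [hblk n hn] at h1
    have h2 := PNat.natPred_add_one n
    rw [hlev]
    omega
  · intro a ha b hb hab
    by_contra hcon
    push_neg at hcon
    rw [hlev, hlev] at hcon
    have hθ := hS (Finset.mem_coe.2 (hppS a ha)) (Finset.mem_coe.2 (hppS b hb))
      (hppmono a ha b hb hab)
    have h2 : theta' I θ (pp b) < theta' I θ (pp a) := by
      unfold theta'
      exact fQ_lt_fQ (by omega) _ _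
    exact absurd (hθ.trans h2) (lt_irrefl _)
  · intro v hv G hGE hGlev
    apply fam_of_wit hFam hem hinc
    have hseg : ∀ n ∈ G, segOf I (pp n) = v - 1 := by
      intro n hn
      have := hGlev n hn
      rw [hlev] at this
      omega
    refine ⟨fun n => eltOf I (pp n), ?_, ?_⟩
    · intro n hn
      have h1 := elt_mem hI (pp n)
      rw [hseg n hn, hblk n (hGE hn), pnn_natPred, pnn_def v hv] at h1
      exact h1
    · intro a ha b hb hab
      have hθ := hS (Finset.mem_coe.2 (hppS a (hGE ha))) (Finset.mem_coe.2 (hppS b (hGE hb)))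
        (hppmono a (hGE ha) b (hGE hb) hab)
      unfold theta' at hθ
      rw [hseg a ha, hseg b hb] at hθ
      have h2 := (fQ_strictMono (v - 1 + 1)).lt_iff_lt.1 hθ
      rw [pnn_def v hv] at h2
      exact h2

end Main3

end St15

theorem stmt_15 (Fam : ℕ+ → Set (Finset ℕ+)) (hFam : ∀ k, FHC (Fam k))
    (I : ℕ+ → ℕ+ → Finset ℕ) (θ : ℕ+ → ℕ → ℚ)
    (hem : ∀ k, Emulates (I k) (θ k) (Fam k))
    (hinc : ∀ k, ∀ n m : ℕ+, n < m → ∀ a ∈ I k n, ∀ b ∈ I k m, a < b) :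
    ∃ (J : ℕ+ → Finset ℕ) (θ' : ℕ → ℚ), Emulates J θ' (DStarOp Fam) ∧
      ∀ n m : ℕ+, n < m → ∀ a ∈ J n, ∀ b ∈ J m, a < b := by
  refine ⟨St15.Jb I, St15.theta' I θ,
    ⟨fun n => St15.Jb_nonempty hem n, fun n => St15.Jb_interval n,
      St15.Jb_disjoint hem, St15.theta'_inj hem, ?_⟩,
    fun n m h => St15.Jb_lt hem h⟩
  intro E
  constructor
  · intro h
    exact St15.DStar_of_norm hFam hem hinc E h
  · intro h
    exact St15.norm_eq_of_DStar hFam hem hinc E h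
end
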